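/- arXiv:math/0207125 — 8 statements merged into one kernel-verified Lean document; each statement's English description precedes it below -/
import Mathlib

section
/- Let P and Q be orthogonal projections on a complex Hilbert space H. Then Ran Q is the graph subspace G(Ran P, X) of some closed densely defined operator X from Ran P to (Ran P)^perp if and only if M_10(P,Q) = {0} and M_01(P,Q) = {0}. -/
/-!
With `K = Ran P` and `L = Ran Q` we have `M₁₀ = K ⊓ Lᗮ` and `M₀₁ = Kᗮ ⊓ L`.

If `L = G(K, X)`, a vector of `K ⊓ Lᗮ` is orthogonal to `x + X x` and to `X x ∈ Kᗮ`, hence to the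
dense subspace `Dom X` of `K`, so it vanishes; and if `x + X x ∈ Kᗮ` then `x ∈ K ⊓ Kᗮ`, so `x = 0`.

Conversely, if both intersections vanish, the orthogonal projection `P` onto `K` is injective on
`L` because `ker P ⊓ L = Kᗮ ⊓ L`, so `L` is the graph subspace of `X : P g ↦ g - P g`. The graph
`{(a, b) ∈ K × Kᗮ | a + b ∈ L}` of `X` is closed, and its domain `P L` is dense in `K` because a
vector `v ⊥ P L` has `P v ∈ K ⊓ Lᗮ`.
-/

open scoped InnerProductSpace

variable {H : Type*} [NormedAddCommGroup H] [InnerProductSpace ℂ H] [CompleteSpace H]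

/-- `IsGraphSubspaceOf N G` expresses that the closed subspace `G ⊆ H` is the graph subspace
`G(N, X) = {x + X x : x ∈ Dom X}` of some closed densely defined operator `X` from the
subspace `N` to its orthogonal complement `Nᗮ`.  The operator is modelled as a partially
defined linear map `X : H →ₗ.[ℂ] H` whose domain is a dense subspace of `N` and whose values
lie in `Nᗮ`; closedness of `X` is the closedness of its graph. -/
def IsGraphSubspaceOf (N G : Submodule ℂ H) : Prop :=
  ∃ X : H →ₗ.[ℂ] H,
    X.domain ≤ N ∧
    (∀ x : X.domain, X x ∈ Nᗮ) ∧
    (N : Set H) ⊆ closure (X.domain : Set H) ∧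
    IsClosed (X.graph : Set (H × H)) ∧
    (G : Set H) = {u : H | ∃ x : X.domain, u = (x : H) + X x}

open Submodule ContinuousLinearMap

namespace ContinuousLinearMap

theorem IsIdempotentElem.apply_eq_self_iff {R M : Type*} [Semiring R] [TopologicalSpace M]
    [AddCommMonoid M] [Module R M] {T : M →L[R] M} (hT : IsIdempotentElem T) {f : M} :
    T f = f ↔ f ∈ T.range :=
  (LinearMap.IsIdempotentElem.mem_range_iff (IsIdempotentElem.toLinearMap hT)).symm

theorem IsStarNormal.apply_eq_zero_iff {𝕜 E : Type*} [RCLike 𝕜] [NormedAddCommGroup E]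
    [InnerProductSpace 𝕜 E] [CompleteSpace E] {T : E →L[𝕜] E} (hT : IsStarNormal T) {f : E} :
    T f = 0 ↔ f ∈ T.rangeᗮ := by
  rw [IsStarNormal.orthogonal_range hT]
  rfl

end ContinuousLinearMap

section

variable {E : Type*} [NormedAddCommGroup E] [InnerProductSpace ℂ E] {K L : Submodule ℂ E}

theorem IsGraphSubspaceOf.inf_orthogonal_eq_bot (h : IsGraphSubspaceOf K L) : K ⊓ Lᗮ = ⊥ := by
  obtain ⟨X, -, hXK, hdense, -, hL⟩ := h
  refine (Submodule.eq_bot_iff _).mpr fun f ⟨hfK, hfL⟩ => ?_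
  have hf_dom : f ∈ X.domainᗮ := fun x hx => by
    have hgraph : (x : E) + X ⟨x, hx⟩ ∈ L := by
      rw [← SetLike.mem_coe, hL]
      exact ⟨⟨x, hx⟩, rfl⟩
    have hfX : ⟪X ⟨x, hx⟩, f⟫_ℂ = 0 := inner_eq_zero_symm.mp (hXK _ f hfK)
    simpa [inner_add_left, hfX] using hfL _ hgraph
  rw [← orthogonal_closure] at hf_dom
  exact inner_self_eq_zero.mp (hf_dom f (hdense hfK))

theorem IsGraphSubspaceOf.orthogonal_inf_eq_bot (h : IsGraphSubspaceOf K L) : Kᗮ ⊓ L = ⊥ := by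
  obtain ⟨X, hdomK, hXK, -, -, hL⟩ := h
  refine (Submodule.eq_bot_iff _).mpr fun f ⟨hfK, hfL⟩ => ?_
  rw [hL] at hfL
  obtain ⟨x, rfl⟩ := hfL
  have hx : (x : E) ∈ K ⊓ Kᗮ := ⟨hdomK x.2, by simpa using Kᗮ.sub_mem hfK (hXK x)⟩
  have hx0 : x = 0 := Subtype.ext ((Submodule.eq_bot_iff _).mp K.inf_orthogonal_eq_bot _ hx)
  simp [hx0]

/-- The pairs `(P g, g - P g)` with `g ∈ L`, where `P` is the orthogonal projection onto `K`. -/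
noncomputable def decompositionGraph (K L : Submodule ℂ E) : Submodule ℂ (E × E) :=
  K.prod Kᗮ ⊓ L.comap (LinearMap.fst ℂ E E + LinearMap.snd ℂ E E)

theorem mem_decompositionGraph {p : E × E} :
    p ∈ decompositionGraph K L ↔ p.1 ∈ K ∧ p.2 ∈ Kᗮ ∧ p.1 + p.2 ∈ L := by
  simp [decompositionGraph, and_assoc]

theorem isClosed_decompositionGraph (hK : IsClosed (K : Set E)) (hL : IsClosed (L : Set E)) :
    IsClosed (decompositionGraph K L : Set (E × E)) :=
  (hK.prod K.isClosed_orthogonal).inter (hL.preimage (continuous_fst.add continuous_snd))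

theorem decompositionGraph_snd_eq_zero (h : Kᗮ ⊓ L = ⊥) :
    ∀ p ∈ decompositionGraph K L, p.1 = 0 → p.2 = 0 := by
  rintro ⟨a, b⟩ hp (rfl : a = 0)
  obtain ⟨-, hb, hab⟩ := mem_decompositionGraph.mp hp
  exact (Submodule.eq_bot_iff _).mp h b ⟨hb, by simpa using hab⟩

theorem starProjection_mem_decompositionGraph [K.HasOrthogonalProjection] {g : E} (hg : g ∈ L) :
    (K.starProjection g, g - K.starProjection g) ∈ decompositionGraph K L :=
  mem_decompositionGraph.mpr
    ⟨K.starProjection_apply_mem g, sub_starProjection_mem_orthogonal g, by simpa using hg⟩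

theorem le_topologicalClosure_map_starProjection [CompleteSpace E] [K.HasOrthogonalProjection]
    (h : K ⊓ Lᗮ = ⊥) : K ≤ (L.map (K.starProjection : E →ₗ[ℂ] E)).topologicalClosure := by
  rw [← orthogonal_orthogonal_eq_closure]
  refine K.le_orthogonal_orthogonal.trans (orthogonal_le fun v hv => ?_)
  have hPv : K.starProjection v ∈ K ⊓ Lᗮ := ⟨K.starProjection_apply_mem v, fun g hg => by
    rw [← inner_starProjection_left_eq_right]
    exact hv _ ⟨g, hg, rfl⟩⟩
  rw [← starProjection_apply_eq_zero_iff]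
  exact (Submodule.eq_bot_iff _).mp h _ hPv

theorem isGraphSubspaceOf_of_inf_orthogonal_eq_bot [CompleteSpace E] (hK : IsClosed (K : Set E))
    (hL : IsClosed (L : Set E)) (h10 : K ⊓ Lᗮ = ⊥) (h01 : Kᗮ ⊓ L = ⊥) :
    IsGraphSubspaceOf K L := by
  have := hK.completeSpace_coe
  have hfunctional := decompositionGraph_snd_eq_zero h01
  set X := (decompositionGraph K L).toLinearPMap
  have hgraph : X.graph = decompositionGraph K L := toLinearPMap_graph_eq _ hfunctional
  have hmem (x : X.domain) : ((x : E), X x) ∈ decompositionGraph K L :=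
    mem_graph_toLinearPMap hfunctional x
  have hproj (g : E) (hg : g ∈ L) :
      ∃ x : X.domain, (x : E) = K.starProjection g ∧ X x = g - K.starProjection g :=
    X.mem_graph_iff.mp (hgraph ▸ starProjection_mem_decompositionGraph hg)
  have hmap : L.map (K.starProjection : E →ₗ[ℂ] E) ≤ X.domain := by
    rintro _ ⟨g, hg, rfl⟩
    obtain ⟨x, hx, -⟩ := hproj g hg
    exact hx ▸ x.2
  refine ⟨X, ?_, fun x => (mem_decompositionGraph.mp (hmem x)).2.1, ?_, ?_, ?_⟩
  · rintro _ ⟨p, hp, rfl⟩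
    exact (mem_decompositionGraph.mp hp).1
  · rw [← topologicalClosure_coe]
    exact (le_topologicalClosure_map_starProjection h10).trans (topologicalClosure_mono hmap)
  · rw [hgraph]
    exact isClosed_decompositionGraph hK hL
  · ext u
    refine ⟨fun hu => ?_, ?_⟩
    · obtain ⟨x, hx, hXx⟩ := hproj u hu
      exact ⟨x, by rw [hx, hXx, add_sub_cancel]⟩
    · rintro ⟨x, rfl⟩
      exact (mem_decompositionGraph.mp (hmem x)).2.2

theorem isGraphSubspaceOf_iff_inf_orthogonal_eq_bot [CompleteSpace E] (hK : IsClosed (K : Set E))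
    (hL : IsClosed (L : Set E)) : IsGraphSubspaceOf K L ↔ K ⊓ Lᗮ = ⊥ ∧ Kᗮ ⊓ L = ⊥ :=
  ⟨fun h => ⟨h.inf_orthogonal_eq_bot, h.orthogonal_inf_eq_bot⟩,
    fun ⟨h10, h01⟩ => isGraphSubspaceOf_of_inf_orthogonal_eq_bot hK hL h10 h01⟩

end

/-- Let `P` and `Q` be orthogonal projections on a complex Hilbert space `H`.
Then `Ran Q` is the graph subspace `G(Ran P, X)` of some closed densely defined operator `X`
from `Ran P` to `(Ran P)ᗮ` if and only if `M₁₀(P,Q) = {0}` and `M₀₁(P,Q) = {0}`. -/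
theorem isGraphSubspaceOf_range_iff_M10_M01_trivial
    (P Q : H →L[ℂ] H)
    (hP : IsIdempotentElem P) (hPsa : IsSelfAdjoint P)
    (hQ : IsIdempotentElem Q) (hQsa : IsSelfAdjoint Q) :
    IsGraphSubspaceOf (LinearMap.range (P : H →ₗ[ℂ] H)) (LinearMap.range (Q : H →ₗ[ℂ] H)) ↔
      ({f : H | P f = f ∧ Q f = 0} = {0} ∧ {f : H | P f = 0 ∧ Q f = f} = {0}) := by
  rw [isGraphSubspaceOf_iff_inf_orthogonal_eq_bot (IsIdempotentElem.isClosed_range hP)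
      (IsIdempotentElem.isClosed_range hQ)]
  simp only [IsIdempotentElem.apply_eq_self_iff hP, IsIdempotentElem.apply_eq_self_iff hQ,
    IsStarNormal.apply_eq_zero_iff hPsa.isStarNormal,
    IsStarNormal.apply_eq_zero_iff hQsa.isStarNormal, ← mem_inf, SetLike.setOfPred_mem_eq]
  rw [← bot_coe (R := ℂ), SetLike.coe_set_eq, SetLike.coe_set_eq]
end

section
/- A closed densely defined operator X from H0 to H1 is a weak solution of the Riccati equation A1 X - X A0 - X V X + V* = 0 if and only if it is a strong solution, i.e., if and only if A0 x + V X x lies in Dom(X) for every x in Dom(X) and A1 X x - X(A0 x + V X x) + V* x = 0 for every x in Dom(X). -/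
/-!
Let `w x = A₀ x + V X x` and `z x = A₁ X x + V* x`. Moving `A₁` and `V` across the inner products
turns the weak equation into `⟪X* y, w x⟫ = ⟪y, z x⟫` for all `y ∈ Dom X*`, i.e. `(w x, z x)` lies
in the graph of `X**`, while the strong equation says that `(w x, z x)` lies in the graph of `X`.
These agree because a closed graph is its own double adjoint: in `H₀ ⊕ H₁` with the `L²` inner
product, the adjoint of a subspace is its orthogonal complement rotated by `(a, b) ↦ (-b, a)`.
-/

open scoped ComplexInnerProductSpace InnerProductSpace

namespace Submodule

variable {𝕜 E F : Type*} [RCLike 𝕜]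
  [NormedAddCommGroup E] [InnerProductSpace 𝕜 E] [NormedAddCommGroup F] [InnerProductSpace 𝕜 F]

theorem le_adjoint_adjoint (g : Submodule 𝕜 (E × F)) : g ≤ g.adjoint.adjoint := by
  intro z hz
  rw [mem_adjoint_iff]
  intro c d hcd
  rw [mem_adjoint_iff] at hcd
  have h := congrArg (starRingEnd 𝕜) (hcd z.1 z.2 hz)
  rwa [map_sub, inner_conj_symm, inner_conj_symm, map_zero, ← neg_eq_zero, neg_sub] at h

variable [CompleteSpace E] [CompleteSpace F]

theorem adjoint_adjoint_le {g : Submodule 𝕜 (E × F)} (hg : IsClosed (g : Set (E × F))) :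
    g.adjoint.adjoint ≤ g := by
  let K : Submodule 𝕜 (WithLp 2 (E × F)) := g.comap (WithLp.linearEquiv 2 𝕜 (E × F)).toLinearMap
  have : CompleteSpace K :=
    (hg.preimage (WithLp.prod_continuous_ofLp 2 E F)).completeSpace_coe
  intro z hz
  rw [mem_adjoint_iff] at hz
  suffices WithLp.toLp 2 z ∈ Kᗮᗮ by
    rwa [orthogonal_orthogonal] at this
  rw [mem_orthogonal]
  intro q hq
  rw [mem_orthogonal] at hq
  -- `q = (a, b) ⊥ g` means exactly that `(-b, a) ∈ g.adjoint`
  have hrot : (-q.ofLp.2, q.ofLp.1) ∈ g.adjoint := by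
    rw [mem_adjoint_iff]
    intro a b hab
    have := hq (WithLp.toLp 2 (a, b)) hab
    rw [WithLp.prod_inner_apply] at this
    simp only [inner_neg_right]
    linear_combination -this
  have := hz _ _ hrot
  rw [WithLp.prod_inner_apply]
  simp only [inner_neg_left] at this
  linear_combination this

theorem adjoint_adjoint {g : Submodule 𝕜 (E × F)} (hg : IsClosed (g : Set (E × F))) :
    g.adjoint.adjoint = g :=
  le_antisymm (adjoint_adjoint_le hg) (le_adjoint_adjoint g)

end Submodule

namespace LinearPMap

theorem forall_mem_graph_iff {R E F ι : Type*} [Ring R] [AddCommGroup E] [Module R E]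
    [AddCommGroup F] [Module R F] (f : E →ₗ.[R] F) (u : ι → E) (v : ι → F) :
    (∀ i, (u i, v i) ∈ f.graph) ↔
      (∀ i, u i ∈ f.domain) ∧ ∀ i (hi : u i ∈ f.domain), f ⟨u i, hi⟩ = v i :=
  ⟨fun h ↦ ⟨fun i ↦ mem_domain_of_mem_graph (h i), fun i hi ↦ ((image_iff hi).mpr (h i)).symm⟩,
    fun ⟨hdom, hval⟩ i ↦ (image_iff (hdom i)).mp (hval i (hdom i)).symm⟩

variable {𝕜 E F : Type*} [RCLike 𝕜]
  [NormedAddCommGroup E] [InnerProductSpace 𝕜 E] [CompleteSpace E]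
  [NormedAddCommGroup F] [InnerProductSpace 𝕜 F] [CompleteSpace F]

theorem mem_graph_iff_forall_adjoint {T : E →ₗ.[𝕜] F} (hT : Dense (T.domain : Set E))
    (hc : T.IsClosed) {u : E} {v : F} :
    (u, v) ∈ T.graph ↔ ∀ y : T†.domain, ⟪T† y, u⟫_𝕜 = ⟪(y : F), v⟫_𝕜 := by
  rw [← Submodule.adjoint_adjoint hc, ← adjoint_graph_eq_graph_adjoint hT,
    Submodule.mem_adjoint_iff]
  simp [sub_eq_zero]

end LinearPMap

theorem weak_iff_strong_solution_riccati_general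
    {H0 H1 : Type*}
    [NormedAddCommGroup H0] [InnerProductSpace ℂ H0] [CompleteSpace H0]
    [NormedAddCommGroup H1] [InnerProductSpace ℂ H1] [CompleteSpace H1]
    (A0 : H0 →L[ℂ] H0) (A1 : H1 →L[ℂ] H1) (V : H1 →L[ℂ] H0)
    (hA1 : IsSelfAdjoint A1)
    (X : H0 →ₗ.[ℂ] H1)
    (hdense : Dense (X.domain : Set H0))
    (hclosed : IsClosed (X.graph : Set (H0 × H1))) :
    -- weak solution
    (∀ (x : X.domain) (y : X.adjoint.domain),
        ⟪A1 (y : H1), X x⟫ - ⟪X.adjoint y, A0 (x : H0)⟫ - ⟪X.adjoint y, V (X x)⟫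
          + ⟪V (y : H1), (x : H0)⟫ = 0) ↔
    -- strong solution
    ((∀ x : X.domain, A0 (x : H0) + V (X x) ∈ X.domain) ∧
      ∀ (x : X.domain) (hx : A0 (x : H0) + V (X x) ∈ X.domain),
        A1 (X x) - X ⟨A0 (x : H0) + V (X x), hx⟩ + ContinuousLinearMap.adjoint V (x : H0) = 0) := by
  let w : X.domain → H0 := fun x ↦ A0 x + V (X x)
  let z : X.domain → H1 := fun x ↦ A1 (X x) + ContinuousLinearMap.adjoint V x
  have weak_iff : ∀ (x : X.domain) (y : X.adjoint.domain),
      ⟪A1 (y : H1), X x⟫ - ⟪X.adjoint y, A0 (x : H0)⟫ - ⟪X.adjoint y, V (X x)⟫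
        + ⟪V (y : H1), (x : H0)⟫ = 0 ↔ ⟪X.adjoint y, w x⟫ = ⟪(y : H1), z x⟫ := by
    intro x y
    rw [show ⟪A1 (y : H1), X x⟫ = ⟪(y : H1), A1 (X x)⟫ from hA1.isSymmetric _ _,
      ← ContinuousLinearMap.adjoint_inner_right, inner_add_right, inner_add_right]
    constructor <;> intro h <;> linear_combination -h
  have strong_iff : ∀ x (hx : w x ∈ X.domain),
      A1 (X x) - X ⟨w x, hx⟩ + ContinuousLinearMap.adjoint V x = 0 ↔ X ⟨w x, hx⟩ = z x := by
    intro x hx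
    rw [sub_add_eq_add_sub, sub_eq_zero, eq_comm]
  refine (forall₂_congr weak_iff).trans ?_
  refine (forall_congr' fun x ↦ (X.mem_graph_iff_forall_adjoint hdense hclosed).symm).trans ?_
  rw [X.forall_mem_graph_iff w z]
  exact and_congr_right' (forall₂_congr strong_iff).symm

/-- A closed densely defined operator `X` from `H₀` to `H₁` is a weak solution
of the Riccati equation `A₁ X - X A₀ - X V X + V* = 0` iff it is a strong solution, i.e., iff
`A₀ x + V (X x) ∈ Dom X` for every `x ∈ Dom X` and `A₁ (X x) - X (A₀ x + V (X x)) + V* x = 0`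
for every `x ∈ Dom X`. -/
theorem weak_iff_strong_solution_riccati
    {H0 H1 : Type*}
    [NormedAddCommGroup H0] [InnerProductSpace ℂ H0] [CompleteSpace H0] [TopologicalSpace.SeparableSpace H0]
    [NormedAddCommGroup H1] [InnerProductSpace ℂ H1] [CompleteSpace H1] [TopologicalSpace.SeparableSpace H1]
    (A0 : H0 →L[ℂ] H0) (A1 : H1 →L[ℂ] H1) (V : H1 →L[ℂ] H0)
    (hA0 : IsSelfAdjoint A0) (hA1 : IsSelfAdjoint A1)
    (X : H0 →ₗ.[ℂ] H1)
    (hdense : Dense (X.domain : Set H0))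
    (hclosed : IsClosed (X.graph : Set (H0 × H1))) :
    -- weak solution
    (∀ (x : X.domain) (y : X.adjoint.domain),
        ⟪A1 (y : H1), X x⟫ - ⟪X.adjoint y, A0 (x : H0)⟫ - ⟪X.adjoint y, V (X x)⟫
          + ⟪V (y : H1), (x : H0)⟫ = 0) ↔
    -- strong solution
    ((∀ x : X.domain, A0 (x : H0) + V (X x) ∈ X.domain) ∧
      ∀ (x : X.domain) (hx : A0 (x : H0) + V (X x) ∈ X.domain),
        A1 (X x) - X ⟨A0 (x : H0) + V (X x), hx⟩ + ContinuousLinearMap.adjoint V (x : H0) = 0) :=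
  weak_iff_strong_solution_riccati_general A0 A1 V hA1 X hdense hclosed
end

section
/- Let G be a closed B-invariant subspace of H, let P be the orthogonal projection of H onto H0 ⊕ {0} and Q the orthogonal projection onto G. Then ||P - Q|| < 1 if and only if G = {x ⊕ Xx : x in H0} for some everywhere-defined bounded operator X : H0 -> H1 satisfying A1 X - X A0 - X V X + V* = 0. In this case ||X|| = ||P - Q|| / sqrt(1 - ||P - Q||^2) and ||P - Q|| = ||X|| / sqrt(1 + ||X||^2). -/
/-!
On `H = H₀ ⊕ H₁` the projection `P` is `u ↦ u.fst ⊕ 0`, so `(P - Q) g = 0 ⊕ (-g.snd)` for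
`g ∈ G` and hence `‖g.snd‖ ≤ ‖P - Q‖ ‖g‖` on `G`. If `‖P - Q‖ < 1`, this shows that no nonzero
vector of `G` lies in `0 ⊕ H₁`, and the compression `x ↦ (Q (x ⊕ 0)).fst` is within `‖P - Q‖` of
the identity of `H₀`, hence invertible; so `G` projects bijectively onto `H₀` and is the graph of a
bounded `X`. Invariance of a graph under `B` is exactly the Riccati equation.

Conversely, if `G` is the graph of `X`, write `w = g + h` with `g = Q w` and `h ⊥ G`. Then
`g.snd = X g.fst`, `h.fst = -X* h.snd` and `(P - Q) w = h.fst ⊕ (-g.snd)`; Pythagoras in `g`, `h`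
and `w` gives `‖P - Q‖² (1 + ‖X‖²) ≤ ‖X‖²`, in particular `‖P - Q‖ < 1`. The bound on `G`
gives the reverse inequality `‖X‖² ≤ ‖P - Q‖² (1 + ‖X‖²)`, so equality holds and both formulas
follow.
-/

noncomputable section

variable {H0 H1 : Type*}
  [NormedAddCommGroup H0] [InnerProductSpace ℂ H0] [CompleteSpace H0]
  [NormedAddCommGroup H1] [InnerProductSpace ℂ H1] [CompleteSpace H1]

/-- The subspace `H₀ ⊕ {0}` of the Hilbert space `H = H₀ ⊕ H₁` (realized as `WithLp 2 (H0 × H1)`). -/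
def firstSummand (H0 H1 : Type*)
    [NormedAddCommGroup H0] [InnerProductSpace ℂ H0]
    [NormedAddCommGroup H1] [InnerProductSpace ℂ H1] :
    Submodule ℂ (WithLp 2 (H0 × H1)) :=
  ((⊤ : Submodule ℂ H0).prod (⊥ : Submodule ℂ H1)).map
    (WithLp.linearEquiv 2 ℂ (H0 × H1)).symm.toLinearMap

/-- The graph subspace `G(H₀, X) = {x ⊕ X x : x ∈ H₀}` of a bounded operator `X : H₀ → H₁`,
viewed inside the Hilbert space `H = H₀ ⊕ H₁`. -/
def graphSubspace (X : H0 →L[ℂ] H1) : Submodule ℂ (WithLp 2 (H0 × H1)) :=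
  (LinearMap.graph X.toLinearMap).map (WithLp.linearEquiv 2 ℂ (H0 × H1)).symm.toLinearMap

theorem ContinuousLinearMap.exists_eq_starProjection_of_range_eq {𝕜 E : Type*} [RCLike 𝕜]
    [NormedAddCommGroup E] [InnerProductSpace 𝕜 E] [CompleteSpace E] {p : E →L[𝕜] E}
    (hp : IsIdempotentElem p) (hp' : IsSelfAdjoint p) {K : Submodule 𝕜 E}
    (hK : LinearMap.range (p : E →ₗ[𝕜] E) = K) :
    ∃ _ : K.HasOrthogonalProjection, p = K.starProjection := by
  subst hK
  exact isStarProjection_iff_eq_starProjection_range.mp ⟨hp, hp'⟩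

theorem sq_le_div_one_add_sq_mul {a b t : ℝ} (ha : 0 ≤ a) (h : a ≤ t * b) :
    a ^ 2 ≤ t ^ 2 / (1 + t ^ 2) * (a ^ 2 + b ^ 2) := by
  have hab : a ^ 2 ≤ t ^ 2 * b ^ 2 := by rw [← mul_pow]; exact pow_le_pow_left₀ ha h 2
  rw [div_mul_eq_mul_div, le_div_iff₀ (by positivity)]
  nlinarith

theorem sq_le_div_one_sub_sq_mul {a b c : ℝ} (hc₀ : 0 ≤ c) (hc : c < 1)
    (h : a ^ 2 ≤ c ^ 2 * (a ^ 2 + b ^ 2)) :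
    a ^ 2 ≤ c ^ 2 / (1 - c ^ 2) * b ^ 2 := by
  have hc2 : 0 < 1 - c ^ 2 := by nlinarith
  rw [div_mul_eq_mul_div, le_div_iff₀ hc2]
  linarith

theorem eq_div_sqrt_one_sub_sq_and_eq_div_sqrt_one_add_sq {c t : ℝ} (hc : 0 ≤ c) (ht : 0 ≤ t)
    (hc1 : c < 1) (h₁ : c ^ 2 ≤ t ^ 2 / (1 + t ^ 2)) (h₂ : t ^ 2 ≤ c ^ 2 / (1 - c ^ 2)) :
    t = c / √(1 - c ^ 2) ∧ c = t / √(1 + t ^ 2) := by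
  have hc2 : 0 < 1 - c ^ 2 := by nlinarith
  rw [le_div_iff₀ (by positivity)] at h₁
  rw [le_div_iff₀ hc2] at h₂
  have key : c ^ 2 * (1 + t ^ 2) = t ^ 2 := by linarith
  constructor
  · rw [eq_div_iff (Real.sqrt_pos.mpr hc2).ne', ← sq_eq_sq₀ (by positivity) hc, mul_pow,
      Real.sq_sqrt hc2.le]
    linarith
  · rw [eq_div_iff (Real.sqrt_pos.mpr (by positivity)).ne', ← sq_eq_sq₀ (by positivity) ht,
      mul_pow, Real.sq_sqrt (by positivity)]
    exact key

theorem ContinuousLinearMap.sq_opNorm_le_of_forall {𝕜 E F : Type*} [NontriviallyNormedField 𝕜]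
    [SeminormedAddCommGroup E] [SeminormedAddCommGroup F] [NormedSpace 𝕜 E] [NormedSpace 𝕜 F]
    (T : E →L[𝕜] F) {K : ℝ} (hK : 0 ≤ K) (h : ∀ x, ‖T x‖ ^ 2 ≤ K * ‖x‖ ^ 2) : ‖T‖ ^ 2 ≤ K := by
  have hT : ‖T‖ ≤ √K := T.opNorm_le_bound (Real.sqrt_nonneg K) fun x ↦ by
    rw [← Real.sqrt_sq (norm_nonneg (T x)), ← Real.sqrt_sq (norm_nonneg x), ← Real.sqrt_mul hK]
    exact Real.sqrt_le_sqrt (h x)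
  calc ‖T‖ ^ 2 ≤ √K ^ 2 := pow_le_pow_left₀ (norm_nonneg T) hT 2
    _ = K := Real.sq_sqrt hK

@[ext]
theorem WithLp.prod_ext {p : ENNReal} {α β : Type*} {u v : WithLp p (α × β)}
    (h₁ : u.fst = v.fst) (h₂ : u.snd = v.snd) : u = v :=
  WithLp.ofLp_injective p (Prod.ext h₁ h₂)

section Subspaces

variable {E F : Type*} [NormedAddCommGroup E] [InnerProductSpace ℂ E]
  [NormedAddCommGroup F] [InnerProductSpace ℂ F]

theorem mem_firstSummand_iff {u : WithLp 2 (E × F)} : u ∈ firstSummand E F ↔ u.snd = 0 := by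
  simp [firstSummand]

theorem mem_graphSubspace_iff {X : E →L[ℂ] F} {u : WithLp 2 (E × F)} :
    u ∈ graphSubspace X ↔ u.snd = X u.fst := by
  simp [graphSubspace]

theorem toLp_mem_graphSubspace (X : E →L[ℂ] F) (x : E) :
    WithLp.toLp 2 (x, X x) ∈ graphSubspace X :=
  mem_graphSubspace_iff.mpr rfl

theorem starProjection_firstSummand_apply [(firstSummand E F).HasOrthogonalProjection]
    (u : WithLp 2 (E × F)) : (firstSummand E F).starProjection u = WithLp.toLp 2 (u.fst, 0) := by
  refine Submodule.eq_starProjection_of_mem_of_inner_eq_zero (mem_firstSummand_iff.mpr rfl)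
    fun w hw ↦ ?_
  simp [mem_firstSummand_iff.mp hw]

theorem fst_eq_neg_adjoint_of_mem_orthogonal_graphSubspace [CompleteSpace E] [CompleteSpace F]
    {X : E →L[ℂ] F} {u : WithLp 2 (E × F)} (hu : u ∈ (graphSubspace X)ᗮ) :
    u.fst = -(X.adjoint u.snd) := by
  rw [eq_neg_iff_add_eq_zero, ← inner_self_eq_zero (𝕜 := ℂ), inner_add_left,
    X.adjoint_inner_left]
  exact (Submodule.mem_orthogonal' _ _).mp hu _ (toLp_mem_graphSubspace X _)

theorem riccati_of_forall_mem_graphSubspace {A₀ : E →L[ℂ] E} {A₁ : F →L[ℂ] F} {V : F →L[ℂ] E}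
    {W : E →L[ℂ] F} {B : WithLp 2 (E × F) →L[ℂ] WithLp 2 (E × F)}
    (hB₁ : ∀ u, (B u).fst = A₀ u.fst + V u.snd) (hB₂ : ∀ u, (B u).snd = W u.fst + A₁ u.snd)
    {X : E →L[ℂ] F} (hX : ∀ u ∈ graphSubspace X, B u ∈ graphSubspace X) :
    A₁.comp X - X.comp A₀ - X.comp (V.comp X) + W = 0 := by
  ext x
  have h := mem_graphSubspace_iff.mp (hX _ (toLp_mem_graphSubspace X x))
  rw [hB₁, hB₂] at h
  simp only [WithLp.toLp_fst, WithLp.toLp_snd, map_add] at h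
  simp only [add_apply, sub_apply, ContinuousLinearMap.comp_apply, zero_apply]
  rw [← sub_eq_zero.mpr h]
  abel

end Subspaces

section Projection

variable {E F : Type*} [NormedAddCommGroup E] [InnerProductSpace ℂ E]
  [NormedAddCommGroup F] [InnerProductSpace ℂ F] [(firstSummand E F).HasOrthogonalProjection]

local notation "P₀" => Submodule.starProjection (firstSummand E F)

section Subspace

variable (G : Submodule ℂ (WithLp 2 (E × F))) [G.HasOrthogonalProjection]

theorem sub_starProjection_apply_of_mem {g : WithLp 2 (E × F)} (hg : g ∈ G) :
    (P₀ - G.starProjection) g = WithLp.toLp 2 (0, -g.snd) := by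
  rw [sub_apply, starProjection_firstSummand_apply, Submodule.starProjection_eq_self_iff.mpr hg]
  ext <;> simp

theorem norm_snd_le_of_mem {g : WithLp 2 (E × F)} (hg : g ∈ G) :
    ‖g.snd‖ ≤ ‖P₀ - G.starProjection‖ * ‖g‖ :=
  calc ‖g.snd‖ = ‖(P₀ - G.starProjection) g‖ := by
        rw [sub_starProjection_apply_of_mem G hg, WithLp.norm_toLp_snd, norm_neg]
    _ ≤ _ := ContinuousLinearMap.le_opNorm _ _

theorem eq_zero_of_mem_of_fst_eq_zero (h : ‖P₀ - G.starProjection‖ < 1)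
    {g : WithLp 2 (E × F)} (hg : g ∈ G) (hg₀ : g.fst = 0) : g = 0 := by
  have hnorm : ‖g‖ = ‖g.snd‖ := by
    conv_lhs => rw [show g = WithLp.toLp 2 (0, g.snd) from WithLp.prod_ext hg₀ rfl]
    exact WithLp.norm_toLp_snd _ _ _ _
  have := norm_snd_le_of_mem G hg
  rw [← hnorm] at this
  exact norm_le_zero_iff.mp (by nlinarith [norm_nonneg g])

theorem norm_sub_fst_starProjection_le (x : E) :
    ‖x - (G.starProjection (WithLp.toLp 2 (x, 0))).fst‖ ≤ ‖P₀ - G.starProjection‖ * ‖x‖ :=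
  calc ‖x - (G.starProjection (WithLp.toLp 2 (x, 0))).fst‖
      = ‖((P₀ - G.starProjection) (WithLp.toLp 2 (x, 0))).fst‖ := by
        rw [sub_apply, starProjection_firstSummand_apply]
        rfl
    _ ≤ ‖(P₀ - G.starProjection) (WithLp.toLp 2 (x, 0))‖ := WithLp.norm_fst_le _ _
    _ ≤ _ := by
        rw [← WithLp.norm_toLp_fst 2 E F x]
        exact ContinuousLinearMap.le_opNorm _ _

theorem exists_eq_graphSubspace_of_norm_sub_starProjection_lt_one [CompleteSpace E]
    (h : ‖P₀ - G.starProjection‖ < 1) :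
    ∃ X : E →L[ℂ] F, G = graphSubspace X := by
  set ι : E →L[ℂ] WithLp 2 (E × F) :=
    (WithLp.prodContinuousLinearEquiv 2 ℂ E F).symm.toContinuousLinearMap ∘L
      ContinuousLinearMap.inl ℂ E F
  set S : E →L[ℂ] E := WithLp.fstL 2 ℂ E F ∘L G.starProjection ∘L ι
  have hS : IsUnit S := by
    have h1S : ‖1 - S‖ < 1 :=
      ((1 - S).opNorm_le_bound (norm_nonneg _) (norm_sub_fst_starProjection_le G)).trans_lt h
    simpa using isUnit_one_sub_of_norm_lt_one h1S
  set σ : E →L[ℂ] WithLp 2 (E × F) := G.starProjection ∘L ι ∘L ↑hS.unit⁻¹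
  have hσG (x : E) : σ x ∈ G := G.starProjection_apply_mem _
  have hσfst (x : E) : (σ x).fst = x := congr($(hS.mul_val_inv) x)
  have hmem_iff (u : WithLp 2 (E × F)) : u ∈ G ↔ u = σ u.fst := by
    refine ⟨fun hu ↦ ?_, fun hu ↦ hu ▸ hσG _⟩
    refine sub_eq_zero.mp (eq_zero_of_mem_of_fst_eq_zero G h (G.sub_mem hu (hσG _)) ?_)
    rw [WithLp.sub_fst, hσfst, sub_self]
  refine ⟨WithLp.sndL 2 ℂ E F ∘L σ, Submodule.ext fun u ↦ ?_⟩
  rw [hmem_iff, mem_graphSubspace_iff]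
  constructor
  · intro hu
    conv_lhs => rw [hu]
    rfl
  · intro hu
    ext
    · exact (hσfst _).symm
    · exact hu

end Subspace

section GraphSubspace

variable (X : E →L[ℂ] F) [(graphSubspace X).HasOrthogonalProjection]

theorem sq_norm_sub_starProjection_graphSubspace_le [CompleteSpace E] [CompleteSpace F] :
    ‖P₀ - (graphSubspace X).starProjection‖ ^ 2 ≤ ‖X‖ ^ 2 / (1 + ‖X‖ ^ 2) := by
  refine ContinuousLinearMap.sq_opNorm_le_of_forall _ (by positivity) fun w ↦ ?_
  set g := (graphSubspace X).starProjection w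
  set h := w - g
  have hg : g.snd = X g.fst := mem_graphSubspace_iff.mp (Submodule.starProjection_apply_mem _ w)
  have hh_orth : h ∈ (graphSubspace X)ᗮ := Submodule.sub_starProjection_mem_orthogonal w
  have hh : h.fst = -(X.adjoint h.snd) := fst_eq_neg_adjoint_of_mem_orthogonal_graphSubspace hh_orth
  have hw : ‖w‖ ^ 2 = ‖g‖ ^ 2 + ‖h‖ ^ 2 := by
    have := norm_add_sq_eq_norm_sq_add_norm_sq_of_inner_eq_zero g h
      ((graphSubspace X).inner_right_of_mem_orthogonal (Submodule.starProjection_apply_mem _ w)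
        hh_orth)
    rw [add_sub_cancel] at this
    simpa only [sq] using this
  have hPQ : ‖(P₀ - (graphSubspace X).starProjection) w‖ ^ 2 = ‖h.fst‖ ^ 2 + ‖g.snd‖ ^ 2 := by
    rw [WithLp.prod_norm_sq_eq_of_L2, sub_apply, starProjection_firstSummand_apply, WithLp.sub_snd,
      WithLp.toLp_snd, zero_sub, norm_neg]
    rfl
  have hg_le : ‖g.snd‖ ^ 2 ≤ ‖X‖ ^ 2 / (1 + ‖X‖ ^ 2) * ‖g‖ ^ 2 := by
    rw [WithLp.prod_norm_sq_eq_of_L2, add_comm (‖g.fst‖ ^ 2)]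
    exact sq_le_div_one_add_sq_mul (norm_nonneg _) (hg ▸ X.le_opNorm _)
  have hh_le : ‖h.fst‖ ^ 2 ≤ ‖X‖ ^ 2 / (1 + ‖X‖ ^ 2) * ‖h‖ ^ 2 := by
    rw [WithLp.prod_norm_sq_eq_of_L2]
    refine sq_le_div_one_add_sq_mul (norm_nonneg _) ?_
    rw [hh, norm_neg, ← ContinuousLinearMap.adjoint.norm_map X]
    exact X.adjoint.le_opNorm _
  rw [hPQ, hw]
  linarith

theorem norm_sub_starProjection_graphSubspace_lt_one [CompleteSpace E] [CompleteSpace F] :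
    ‖P₀ - (graphSubspace X).starProjection‖ < 1 := by
  have h := sq_norm_sub_starProjection_graphSubspace_le X
  rw [le_div_iff₀ (by positivity)] at h
  by_contra! hc
  nlinarith [one_le_pow₀ (n := 2) hc]

theorem sq_norm_le_of_norm_sub_starProjection_graphSubspace_lt_one
    (h : ‖P₀ - (graphSubspace X).starProjection‖ < 1) :
    ‖X‖ ^ 2 ≤ ‖P₀ - (graphSubspace X).starProjection‖ ^ 2 /
      (1 - ‖P₀ - (graphSubspace X).starProjection‖ ^ 2) := by
  have hc := norm_nonneg (P₀ - (graphSubspace X).starProjection)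
  refine X.sq_opNorm_le_of_forall (div_nonneg (by positivity) (by nlinarith)) fun x ↦ ?_
  have hx := norm_snd_le_of_mem _ (toLp_mem_graphSubspace X x)
  rw [← sq_le_sq₀ (norm_nonneg _) (by positivity), mul_pow, WithLp.prod_norm_sq_eq_of_L2,
    add_comm] at hx
  exact sq_le_div_one_sub_sq_mul hc h hx

end GraphSubspace

end Projection

theorem norm_sub_proj_lt_one_iff_graph_of_bounded_riccati_solution_general
    (A0 : H0 →L[ℂ] H0) (A1 : H1 →L[ℂ] H1) (V : H1 →L[ℂ] H0)
    (B : WithLp 2 (H0 × H1) →L[ℂ] WithLp 2 (H0 × H1))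
    (hB : ∀ u : WithLp 2 (H0 × H1),
      WithLp.equiv 2 (H0 × H1) (B u) =
        (A0 (WithLp.equiv 2 (H0 × H1) u).1 + V (WithLp.equiv 2 (H0 × H1) u).2,
         ContinuousLinearMap.adjoint V (WithLp.equiv 2 (H0 × H1) u).1
           + A1 (WithLp.equiv 2 (H0 × H1) u).2))
    (G : Submodule ℂ (WithLp 2 (H0 × H1)))
    (hGinv : ∀ u ∈ G, B u ∈ G)
    (P Q : WithLp 2 (H0 × H1) →L[ℂ] WithLp 2 (H0 × H1))
    (hP : IsIdempotentElem P) (hPsa : IsSelfAdjoint P)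
    (hQ : IsIdempotentElem Q) (hQsa : IsSelfAdjoint Q)
    (hPran : LinearMap.range (P : WithLp 2 (H0 × H1) →ₗ[ℂ] WithLp 2 (H0 × H1)) = firstSummand H0 H1)
    (hQran : LinearMap.range (Q : WithLp 2 (H0 × H1) →ₗ[ℂ] WithLp 2 (H0 × H1)) = G) :
    (‖P - Q‖ < 1 ↔
      ∃ X : H0 →L[ℂ] H1,
        A1.comp X - X.comp A0 - X.comp (V.comp X) + ContinuousLinearMap.adjoint V = 0 ∧
        G = graphSubspace X) ∧
    (∀ X : H0 →L[ℂ] H1,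
      A1.comp X - X.comp A0 - X.comp (V.comp X) + ContinuousLinearMap.adjoint V = 0 →
      G = graphSubspace X →
        ‖X‖ = ‖P - Q‖ / Real.sqrt (1 - ‖P - Q‖ ^ 2) ∧
        ‖P - Q‖ = ‖X‖ / Real.sqrt (1 + ‖X‖ ^ 2)) := by
  obtain ⟨_, rfl⟩ := P.exists_eq_starProjection_of_range_eq hP hPsa hPran
  obtain ⟨_, rfl⟩ := Q.exists_eq_starProjection_of_range_eq hQ hQsa hQran
  refine ⟨⟨fun h ↦ ?_, ?_⟩, ?_⟩
  · obtain ⟨X, rfl⟩ := exists_eq_graphSubspace_of_norm_sub_starProjection_lt_one G h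
    exact ⟨X, riccati_of_forall_mem_graphSubspace (fun u ↦ congrArg Prod.fst (hB u))
      (fun u ↦ congrArg Prod.snd (hB u)) hGinv, rfl⟩
  · rintro ⟨X, -, rfl⟩
    exact norm_sub_starProjection_graphSubspace_lt_one X
  · rintro X - rfl
    have h := norm_sub_starProjection_graphSubspace_lt_one X
    exact eq_div_sqrt_one_sub_sq_and_eq_div_sqrt_one_add_sq (norm_nonneg _) (norm_nonneg _) h
      (sq_norm_sub_starProjection_graphSubspace_le X)
      (sq_norm_le_of_norm_sub_starProjection_graphSubspace_lt_one X h)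

/-- Let `G` be a closed `B`-invariant subspace of `H = H₀ ⊕ H₁`, let `P` be the
orthogonal projection onto `H₀ ⊕ {0}` and `Q` the orthogonal projection onto `G`.  Then
`‖P - Q‖ < 1` iff `G` is the graph of a bounded solution `X` of the Riccati equation
`A₁ X - X A₀ - X V X + V* = 0`; in this case `‖X‖ = ‖P - Q‖ / √(1 - ‖P - Q‖²)` and
`‖P - Q‖ = ‖X‖ / √(1 + ‖X‖²)`. -/
theorem norm_sub_proj_lt_one_iff_graph_of_bounded_riccati_solution
    [TopologicalSpace.SeparableSpace H0] [TopologicalSpace.SeparableSpace H1]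
    (A0 : H0 →L[ℂ] H0) (A1 : H1 →L[ℂ] H1) (V : H1 →L[ℂ] H0)
    (hA0 : IsSelfAdjoint A0) (hA1 : IsSelfAdjoint A1)
    (B : WithLp 2 (H0 × H1) →L[ℂ] WithLp 2 (H0 × H1))
    (hB : ∀ u : WithLp 2 (H0 × H1),
      WithLp.equiv 2 (H0 × H1) (B u) =
        (A0 (WithLp.equiv 2 (H0 × H1) u).1 + V (WithLp.equiv 2 (H0 × H1) u).2,
         ContinuousLinearMap.adjoint V (WithLp.equiv 2 (H0 × H1) u).1
           + A1 (WithLp.equiv 2 (H0 × H1) u).2))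
    (G : Submodule ℂ (WithLp 2 (H0 × H1)))
    (hGclosed : IsClosed (G : Set (WithLp 2 (H0 × H1))))
    (hGinv : ∀ u ∈ G, B u ∈ G)
    (P Q : WithLp 2 (H0 × H1) →L[ℂ] WithLp 2 (H0 × H1))
    (hP : IsIdempotentElem P) (hPsa : IsSelfAdjoint P)
    (hQ : IsIdempotentElem Q) (hQsa : IsSelfAdjoint Q)
    (hPran : LinearMap.range (P : WithLp 2 (H0 × H1) →ₗ[ℂ] WithLp 2 (H0 × H1)) = firstSummand H0 H1)
    (hQran : LinearMap.range (Q : WithLp 2 (H0 × H1) →ₗ[ℂ] WithLp 2 (H0 × H1)) = G) :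
    (‖P - Q‖ < 1 ↔
      ∃ X : H0 →L[ℂ] H1,
        A1.comp X - X.comp A0 - X.comp (V.comp X) + ContinuousLinearMap.adjoint V = 0 ∧
        G = graphSubspace X) ∧
    (∀ X : H0 →L[ℂ] H1,
      A1.comp X - X.comp A0 - X.comp (V.comp X) + ContinuousLinearMap.adjoint V = 0 →
      G = graphSubspace X →
        ‖X‖ = ‖P - Q‖ / Real.sqrt (1 - ‖P - Q‖ ^ 2) ∧
        ‖P - Q‖ = ‖X‖ / Real.sqrt (1 + ‖X‖ ^ 2)) :=
  norm_sub_proj_lt_one_iff_graph_of_bounded_riccati_solution_general A0 A1 V B hB G hGinv P Q hP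
    hPsa hQ hQsa hPran hQran

end
end

section
/- Let P and Q be orthogonal projections on a complex Hilbert space H. If there exists a nonzero vector f in H with either (Pf = f and Qf = 0) or (Pf = 0 and Qf = f), then ||P - Q|| = 1. -/
open scoped ComplexConjugate
open ContinuousLinearMap

local notation "⟪" x ", " y "⟫" => @inner ℂ _ _ x y

private lemma selfAdj_inner_apply {H : Type*} [NormedAddCommGroup H]
    [InnerProductSpace ℂ H] [CompleteSpace H] (P : H →L[ℂ] H)
    (hPsa : IsSelfAdjoint P) (x y : H) : ⟪P x, y⟫ = ⟪x, P y⟫ := by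
  rw [← hPsa.adjoint_eq, ContinuousLinearMap.adjoint_inner_left, hPsa.adjoint_eq]

private lemma proj_norm_apply_le {H : Type*} [NormedAddCommGroup H]
    [InnerProductSpace ℂ H] [CompleteSpace H] (P : H →L[ℂ] H)
    (hP : IsIdempotentElem P) (hPsa : IsSelfAdjoint P) (y : H) :
    ‖P y‖ ≤ ‖y‖ := by
  have h1 : ⟪P y, P y⟫ = ⟪y, P y⟫ := by
    rw [selfAdj_inner_apply P hPsa]
    congr 1
    have := congrArg (fun T : H →L[ℂ] H => T y) hP
    simpa using this
  have h2 : ‖P y‖ ^ 2 = ‖⟪y, P y⟫‖ := by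
    rw [← h1, inner_self_eq_norm_sq_to_K]
    simp [pow_two]
  have h3 : ‖⟪y, P y⟫‖ ≤ ‖y‖ * ‖P y‖ := norm_inner_le_norm y (P y)
  nlinarith [norm_nonneg (P y), norm_nonneg y]

/-- Let `P` and `Q` be orthogonal projections on a complex Hilbert space `H`.
If there exists a nonzero vector `f` with either (`P f = f` and `Q f = 0`) or
(`P f = 0` and `Q f = f`), then `‖P - Q‖ = 1`. -/
theorem norm_sub_eq_one_of_exists_M10_or_M01
    {H : Type*} [NormedAddCommGroup H] [InnerProductSpace ℂ H] [CompleteSpace H]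
    (P Q : H →L[ℂ] H)
    (hP : IsIdempotentElem P) (hPsa : IsSelfAdjoint P)
    (hQ : IsIdempotentElem Q) (hQsa : IsSelfAdjoint Q)
    (f : H) (hf : f ≠ 0)
    (h : (P f = f ∧ Q f = 0) ∨ (P f = 0 ∧ Q f = f)) :
    ‖P - Q‖ = 1 := by
  have hPapp : ∀ x, P (P x) = P x := fun x => by
    have := congrArg (fun T : H →L[ℂ] H => T x) hP; simpa using this
  have hQapp : ∀ x, Q (Q x) = Q x := fun x => by
    have := congrArg (fun T : H →L[ℂ] H => T x) hQ; simpa using this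
  -- upper bound
  have hub : ∀ x : H, ‖(P - Q) x‖ ≤ ‖x‖ := by
    intro x
    set a := P (x - Q x) with ha
    set b := P (Q x) - Q x with hb
    have hsum : (P - Q) x = a + b := by
      simp [ha, hb, map_sub]
    have hortho : ⟪a, b⟫ = 0 := by
      rw [ha, hb, selfAdj_inner_apply P hPsa]
      have : P (P (Q x) - Q x) = 0 := by
        rw [map_sub, hPapp]; simp
      rw [this, inner_zero_right]
    have hab : ‖a + b‖ ^ 2 = ‖a‖ ^ 2 + ‖b‖ ^ 2 := by
      have := norm_add_sq_eq_norm_sq_add_norm_sq_of_inner_eq_zero a b hortho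
      simpa [pow_two] using this
    have hx : ‖x‖ ^ 2 = ‖x - Q x‖ ^ 2 + ‖Q x‖ ^ 2 := by
      have hoq : ⟪x - Q x, Q x⟫ = 0 := by
        have hqq : ⟪Q x, Q x⟫ = ⟪x, Q x⟫ := by
          rw [selfAdj_inner_apply Q hQsa, hQapp]
        rw [inner_sub_left, hqq]
        ring
      have := norm_add_sq_eq_norm_sq_add_norm_sq_of_inner_eq_zero (x - Q x) (Q x) hoq
      simpa [pow_two] using this
    have ha_le : ‖a‖ ≤ ‖x - Q x‖ := proj_norm_apply_le P hP hPsa _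
    have hb_le : ‖b‖ ≤ ‖Q x‖ := by
      have h1P : IsIdempotentElem (1 - P) := hP.one_sub
      have h1Psa : IsSelfAdjoint (1 - P) := (IsSelfAdjoint.one (R := H →L[ℂ] H)).sub hPsa
      have : b = -((1 - P) (Q x)) := by simp [hb]
      rw [this, norm_neg]
      exact proj_norm_apply_le (1 - P) h1P h1Psa _
    have hsq : ‖(P - Q) x‖ ^ 2 ≤ ‖x‖ ^ 2 := by
      rw [hsum, hab, hx]
      have := sq_le_sq' (by linarith [norm_nonneg a, norm_nonneg (x - Q x)]) ha_le
      nlinarith [norm_nonneg a, norm_nonneg b, norm_nonneg (x - Q x), norm_nonneg (Q x)]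
    nlinarith [norm_nonneg x, norm_nonneg ((P - Q) x)]
  have hle : ‖P - Q‖ ≤ 1 := by
    refine ContinuousLinearMap.opNorm_le_bound _ zero_le_one ?_
    intro x; simpa using hub x
  have hfpos : (0:ℝ) < ‖f‖ := norm_pos_iff.mpr hf
  have happ : ‖(P - Q) f‖ = ‖f‖ := by
    rcases h with ⟨h1, h2⟩ | ⟨h1, h2⟩ <;> simp [h1, h2]
  have hge : 1 ≤ ‖P - Q‖ := by
    have := (P - Q).le_opNorm f
    rw [happ] at this
    nlinarith
  linarith
end

section
/- Let X : H0 -> H1 be an everywhere-defined bounded solution of the Riccati equation A1 X - X A0 - X V X + V* = 0 and let Q be the orthogonal projection of H onto the graph G(H0,X). Then Q is an isolated point, in the operator norm topology, of the set of all orthogonal projections onto closed B-invariant subspaces of H if and only if X is an isolated point, in the operator norm topology, of the set of all bounded solutions of the Riccati equation; that is, there is a neighborhood of X in the bounded operators from H0 to H1 containing no solution other than X. -/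
/-! The graph of a bounded `Y : H₀ → H₁` is `B`-invariant exactly when `Y` solves the Riccati
equation, so it suffices to compare distances between graphs with distances between their
orthogonal projections. On the one hand `‖P_Y - P_X‖ ≤ 2 ‖Y - X‖`, because each projection
moves a vector of the other graph by at most `‖Y - X‖` times its norm. On the other hand, if an
orthogonal projection `R` is close to `P_X`, then `fst ∘ R` restricted to the graph of `X` is
close to the identity of `H₀`, hence invertible; so `fst` maps `range R` isomorphically onto
`H₀`, `range R` is the graph of some `Y`, and `‖Y - X‖ = O(‖R - P_X‖)`. -/

open ContinuousLinearMap WithLp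

theorem IsSelfAdjoint.norm_sub_le_norm_one_sub_mul_add {A : Type*} [NormedRing A] [StarRing A]
    [CStarRing A] {p q : A} (hp : IsSelfAdjoint p) (hq : IsSelfAdjoint q) :
    ‖p - q‖ ≤ ‖(1 - q) * p‖ + ‖(1 - p) * q‖ := by
  have h : p - q = star ((1 - q) * p) - (1 - p) * q := by
    rw [star_mul, star_sub, star_one, hp.star_eq, hq.star_eq]
    noncomm_ring
  rw [h, ← norm_star ((1 - q) * p)]
  exact norm_sub_le _ _

section StarProjection

variable {𝕜 E : Type*} [RCLike 𝕜] [NormedAddCommGroup E] [InnerProductSpace 𝕜 E]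
  [CompleteSpace E]

theorem IsStarProjection.norm_sub_apply_le {p : E →L[𝕜] E} (hp : IsStarProjection p)
    {z : E} (hz : p z = z) (u : E) : ‖u - p u‖ ≤ ‖u - z‖ := by
  have hu : u - p u = (1 - p) (u - z) := by simp [hz]
  rw [hu]
  exact ((1 - p).le_opNorm _).trans
    (mul_le_of_le_one_left (norm_nonneg _) (IsStarProjection.norm_le _ hp.one_sub))

theorem IsStarProjection.norm_one_sub_mul_le {p q : E →L[𝕜] E} (hp : IsStarProjection p)
    {d : ℝ} (hd : 0 ≤ d) (h : ∀ w ∈ LinearMap.range p.toLinearMap, ‖w - q w‖ ≤ d * ‖w‖) :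
    ‖(1 - q) * p‖ ≤ d := by
  refine opNorm_le_bound _ hd fun v => ?_
  calc ‖((1 - q) * p) v‖ = ‖p v - q (p v)‖ := rfl
    _ ≤ d * ‖p v‖ := h _ (LinearMap.mem_range_self _ v)
    _ ≤ d * ‖v‖ := by
      gcongr
      exact (p.le_opNorm v).trans
        (mul_le_of_le_one_left (norm_nonneg _) (IsStarProjection.norm_le _ hp))

theorem IsStarProjection.norm_sub_le_two_mul {p q : E →L[𝕜] E} (hp : IsStarProjection p)
    (hq : IsStarProjection q) {d : ℝ} (hd : 0 ≤ d)
    (hpq : ∀ w ∈ LinearMap.range p.toLinearMap, ‖w - q w‖ ≤ d * ‖w‖)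
    (hqp : ∀ w ∈ LinearMap.range q.toLinearMap, ‖w - p w‖ ≤ d * ‖w‖) :
    ‖p - q‖ ≤ 2 * d := by
  linarith [IsSelfAdjoint.norm_sub_le_norm_one_sub_mul_add (A := E →L[𝕜] E) hp.isSelfAdjoint
    hq.isSelfAdjoint, hp.norm_one_sub_mul_le hd hpq, hq.norm_one_sub_mul_le hd hqp]

end StarProjection

section Graph

variable {𝕜 H0 H1 : Type*} [NontriviallyNormedField 𝕜]
  [NormedAddCommGroup H0] [NormedSpace 𝕜 H0] [NormedAddCommGroup H1] [NormedSpace 𝕜 H1]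

theorem WithLp.prod_norm_le_norm_fst_add_norm_snd (u : WithLp 2 (H0 × H1)) :
    ‖u‖ ≤ ‖u.fst‖ + ‖u.snd‖ := by
  rw [prod_norm_eq_of_L2, Real.sqrt_le_left (by positivity)]
  nlinarith [norm_nonneg u.fst, norm_nonneg u.snd]

def graphSubmodule (Y : H0 →L[𝕜] H1) : Submodule 𝕜 (WithLp 2 (H0 × H1)) :=
  (LinearMap.graph Y.toLinearMap).map (WithLp.linearEquiv 2 𝕜 (H0 × H1)).symm.toLinearMap

theorem mem_graphSubmodule {Y : H0 →L[𝕜] H1} {u : WithLp 2 (H0 × H1)} :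
    u ∈ graphSubmodule Y ↔ u.snd = Y u.fst :=
  (Submodule.mem_map_equiv _).trans (LinearMap.mem_graph_iff _ _)

theorem isClosed_graphSubmodule (Y : H0 →L[𝕜] H1) :
    IsClosed (graphSubmodule Y : Set (WithLp 2 (H0 × H1))) := by
  have h : (graphSubmodule Y : Set (WithLp 2 (H0 × H1))) = {u | u.snd = Y u.fst} := by
    ext u; exact mem_graphSubmodule
  rw [h]
  exact isClosed_eq (sndL 2 𝕜 H0 H1).continuous (Y ∘L fstL 2 𝕜 H0 H1).continuous

instance [CompleteSpace H0] [CompleteSpace H1] (Y : H0 →L[𝕜] H1) :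
    CompleteSpace (graphSubmodule Y) :=
  (isClosed_graphSubmodule Y).completeSpace_coe

def graphEmbedding (Y : H0 →L[𝕜] H1) : H0 →L[𝕜] WithLp 2 (H0 × H1) :=
  (prodContinuousLinearEquiv 2 𝕜 H0 H1).symm.toContinuousLinearMap ∘L
    (ContinuousLinearMap.id 𝕜 H0).prod Y

@[simp]
theorem graphEmbedding_apply (Y : H0 →L[𝕜] H1) (x : H0) :
    graphEmbedding Y x = toLp 2 (x, Y x) :=
  rfl

theorem graphEmbedding_mem (Y : H0 →L[𝕜] H1) (x : H0) :
    graphEmbedding Y x ∈ graphSubmodule Y :=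
  mem_graphSubmodule.2 rfl

theorem graphEmbedding_fst_of_mem {Y : H0 →L[𝕜] H1} {u : WithLp 2 (H0 × H1)}
    (hu : u ∈ graphSubmodule Y) : graphEmbedding Y u.fst = u :=
  (WithLp.ext_iff 2).2 (Prod.ext rfl (mem_graphSubmodule.1 hu).symm)

theorem graphSubmodule_injective :
    Function.Injective (graphSubmodule : (H0 →L[𝕜] H1) → Submodule 𝕜 (WithLp 2 (H0 × H1))) := by
  intro Y X h
  ext x
  have hx : graphEmbedding Y x ∈ graphSubmodule X := h ▸ graphEmbedding_mem Y x
  simpa using mem_graphSubmodule.1 hx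

theorem norm_graphEmbedding_apply_le (Y : H0 →L[𝕜] H1) (x : H0) :
    ‖graphEmbedding Y x‖ ≤ (1 + ‖Y‖) * ‖x‖ := by
  calc ‖graphEmbedding Y x‖ ≤ ‖x‖ + ‖Y x‖ := prod_norm_le_norm_fst_add_norm_snd _
    _ ≤ (1 + ‖Y‖) * ‖x‖ := by linarith [Y.le_opNorm x]

theorem norm_sub_graphEmbedding_fst_le {X Y : H0 →L[𝕜] H1} {w : WithLp 2 (H0 × H1)}
    (hw : w ∈ graphSubmodule Y) : ‖w - graphEmbedding X w.fst‖ ≤ ‖Y - X‖ * ‖w‖ := by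
  calc ‖w - graphEmbedding X w.fst‖ ≤ ‖(Y - X) w.fst‖ := by
        simpa [mem_graphSubmodule.1 hw] using
          prod_norm_le_norm_fst_add_norm_snd (w - graphEmbedding X w.fst)
    _ ≤ ‖Y - X‖ * ‖w.fst‖ := (Y - X).le_opNorm _
    _ ≤ ‖Y - X‖ * ‖w‖ := by gcongr; exact WithLp.norm_fst_le (x := w)

theorem norm_snd_sub_apply_fst_le (X : H0 →L[𝕜] H1) {w : WithLp 2 (H0 × H1)}
    (hw : w ∈ graphSubmodule X) (u : WithLp 2 (H0 × H1)) :
    ‖u.snd - X u.fst‖ ≤ (1 + ‖X‖) * ‖u - w‖ := by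
  have h : u.snd - X u.fst = (u - w).snd - X (u - w).fst := by
    simp [mem_graphSubmodule.1 hw]
  calc ‖u.snd - X u.fst‖ ≤ ‖(u - w).snd‖ + ‖X‖ * ‖(u - w).fst‖ := by
        rw [h]; exact (norm_sub_le _ _).trans (by gcongr; exact X.le_opNorm _)
    _ ≤ (1 + ‖X‖) * ‖u - w‖ := by
        nlinarith [WithLp.norm_snd_le (x := u - w), WithLp.norm_fst_le (x := u - w),
          norm_nonneg X]

theorem riccati_eq_zero_iff_graph_invariant {A0 : H0 →L[𝕜] H0} {A1 : H1 →L[𝕜] H1}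
    {V : H1 →L[𝕜] H0} {W : H0 →L[𝕜] H1} {B : WithLp 2 (H0 × H1) →L[𝕜] WithLp 2 (H0 × H1)}
    (hB : ∀ u : WithLp 2 (H0 × H1),
      WithLp.equiv 2 (H0 × H1) (B u) =
        (A0 (WithLp.equiv 2 (H0 × H1) u).1 + V (WithLp.equiv 2 (H0 × H1) u).2,
         W (WithLp.equiv 2 (H0 × H1) u).1 + A1 (WithLp.equiv 2 (H0 × H1) u).2))
    (Y : H0 →L[𝕜] H1) :
    A1.comp Y - Y.comp A0 - Y.comp (V.comp Y) + W = 0 ↔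
      ∀ u ∈ graphSubmodule Y, B u ∈ graphSubmodule Y := by
  have hBY : ∀ x, B (graphEmbedding Y x) ∈ graphSubmodule Y ↔
      (A1.comp Y - Y.comp A0 - Y.comp (V.comp Y) + W) x = 0 := by
    intro x
    rw [mem_graphSubmodule, show B (graphEmbedding Y x) = toLp 2 _ from
      (WithLp.equiv 2 (H0 × H1)).symm_apply_eq.2 (hB _)]
    simp only [WithLp.equiv_apply, toLp_fst, toLp_snd, graphEmbedding_apply, map_add,
      add_apply, sub_apply, comp_apply]
    rw [← sub_eq_zero]
    exact Iff.of_eq (congrArg (· = 0) (by abel))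
  constructor
  · intro h u hu
    rw [← graphEmbedding_fst_of_mem hu, hBY, h, zero_apply]
  · intro h
    ext x
    exact (hBY x).1 (h _ (graphEmbedding_mem Y x))

theorem eq_graphSubmodule_of_rightInverse {M : Submodule 𝕜 (WithLp 2 (H0 × H1))}
    (s : H0 →L[𝕜] WithLp 2 (H0 × H1)) (hsM : ∀ x, s x ∈ M) (hs : ∀ x, (s x).fst = x)
    (hM : ∀ u ∈ M, u.fst = 0 → u = 0) : M = graphSubmodule (sndL 2 𝕜 H0 H1 ∘L s) := by
  ext u
  rw [mem_graphSubmodule]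
  constructor
  · intro hu
    have hus : u = s u.fst :=
      sub_eq_zero.1 (hM _ (M.sub_mem hu (hsM _)) (by simp [hs]))
    exact congrArg WithLp.snd hus
  · intro hu
    have hus : s u.fst = u := (WithLp.ext_iff 2).2 (Prod.ext (hs _) hu.symm)
    exact hus ▸ hsM u.fst

theorem norm_sub_le_of_forall_mem_graphSubmodule {X Y : H0 →L[𝕜] H1} {κ : ℝ} (hκ₀ : 0 ≤ κ)
    (hκ : κ ≤ 1 / 2) (h : ∀ u ∈ graphSubmodule Y, ‖u.snd - X u.fst‖ ≤ κ * ‖u‖) :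
    ‖Y - X‖ ≤ 2 * κ * (1 + ‖X‖) := by
  refine opNorm_le_bound _ (by positivity) fun x => ?_
  have hx := h _ (graphEmbedding_mem Y x)
  simp only [graphEmbedding_apply, toLp_fst, toLp_snd] at hx
  have hY : ‖toLp 2 (x, Y x)‖ ≤ (1 + ‖X‖) * ‖x‖ + ‖(Y - X) x‖ := by
    calc ‖toLp 2 (x, Y x)‖ ≤ ‖x‖ + ‖X x + (Y - X) x‖ :=
          prod_norm_le_norm_fst_add_norm_snd (toLp 2 (x, Y x)) |>.trans_eq (by simp)
      _ ≤ (1 + ‖X‖) * ‖x‖ + ‖(Y - X) x‖ := by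
          linarith [norm_add_le (X x) ((Y - X) x), X.le_opNorm x]
  rw [← sub_apply] at hx
  nlinarith [mul_le_mul_of_nonneg_left hY hκ₀, norm_nonneg ((Y - X) x), norm_nonneg x]

section NearbyIdempotent

variable {R Q : WithLp 2 (H0 × H1) →L[𝕜] WithLp 2 (H0 × H1)} {X : H0 →L[𝕜] H1}

theorem norm_snd_sub_apply_fst_le_of_mem_range (hR : IsIdempotentElem R)
    (hQX : LinearMap.range Q.toLinearMap = graphSubmodule X) {u : WithLp 2 (H0 × H1)}
    (hu : u ∈ LinearMap.range R.toLinearMap) :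
    ‖u.snd - X u.fst‖ ≤ (1 + ‖X‖) * ‖R - Q‖ * ‖u‖ := by
  have hRu : R u = u := (LinearMap.IsIdempotentElem.mem_range_iff hR.toLinearMap).1 hu
  calc ‖u.snd - X u.fst‖ ≤ (1 + ‖X‖) * ‖u - Q u‖ :=
        norm_snd_sub_apply_fst_le X (hQX ▸ LinearMap.mem_range_self _ u) u
    _ = (1 + ‖X‖) * ‖(R - Q) u‖ := by rw [sub_apply, hRu]
    _ ≤ (1 + ‖X‖) * ‖R - Q‖ * ‖u‖ := by rw [mul_assoc]; gcongr; exact le_opNorm _ _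

theorem norm_one_sub_fst_comp_comp_graphEmbedding_le (hQ : IsIdempotentElem Q)
    (hQX : LinearMap.range Q.toLinearMap = graphSubmodule X) :
    ‖1 - fstL 2 𝕜 H0 H1 ∘L R ∘L graphEmbedding X‖ ≤ (1 + ‖X‖) * ‖R - Q‖ := by
  refine opNorm_le_bound _ (by positivity) fun x => ?_
  have hQx : Q (graphEmbedding X x) = graphEmbedding X x :=
    (LinearMap.IsIdempotentElem.mem_range_iff hQ.toLinearMap).1 (hQX ▸ graphEmbedding_mem X x)
  calc ‖(1 - fstL 2 𝕜 H0 H1 ∘L R ∘L graphEmbedding X) x‖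
        = ‖((Q - R) (graphEmbedding X x)).fst‖ := by rw [sub_apply Q R, hQx]; simp
    _ ≤ ‖Q - R‖ * ‖graphEmbedding X x‖ :=
        (WithLp.norm_fst_le (x := _)).trans (le_opNorm _ _)
    _ ≤ ‖R - Q‖ * ((1 + ‖X‖) * ‖x‖) := by
        rw [norm_sub_rev]; gcongr; exact norm_graphEmbedding_apply_le X x
    _ = (1 + ‖X‖) * ‖R - Q‖ * ‖x‖ := by ring

theorem exists_range_eq_graphSubmodule [CompleteSpace H0] (hR : IsIdempotentElem R)
    (hQ : IsIdempotentElem Q) (hQX : LinearMap.range Q.toLinearMap = graphSubmodule X)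
    (hRQ : (1 + ‖X‖) * ‖R - Q‖ ≤ 1 / 2) :
    ∃ Y : H0 →L[𝕜] H1, LinearMap.range R.toLinearMap = graphSubmodule Y ∧
      ‖Y - X‖ ≤ 2 * (1 + ‖X‖) ^ 2 * ‖R - Q‖ := by
  set T := fstL 2 𝕜 H0 H1 ∘L R ∘L graphEmbedding X
  obtain ⟨U, hU⟩ : IsUnit T := by
    simpa using isUnit_one_sub_of_norm_lt_one
      ((norm_one_sub_fst_comp_comp_graphEmbedding_le hQ hQX).trans_lt (by linarith))
  set S : H0 →L[𝕜] H0 := ↑U⁻¹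
  set s := R ∘L graphEmbedding X ∘L S
  have hs : ∀ x, (s x).fst = x := fun x => by
    change T (S x) = x
    rw [← hU]
    exact congr($(U.mul_inv) x)
  have hfst : ∀ u ∈ LinearMap.range R.toLinearMap, u.fst = 0 → u = 0 := by
    intro u hu h0
    have hsnd := norm_snd_sub_apply_fst_le_of_mem_range hR hQX hu
    rw [h0, map_zero, sub_zero] at hsnd
    have hu' : ‖u‖ ≤ ‖u.snd‖ := by simpa [h0] using prod_norm_le_norm_fst_add_norm_snd u
    exact norm_le_zero_iff.1 (by nlinarith [norm_nonneg u])
  have hRY := eq_graphSubmodule_of_rightInverse (M := LinearMap.range R.toLinearMap) s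
    (fun x => LinearMap.mem_range_self _ (graphEmbedding X (S x))) hs hfst
  refine ⟨_, hRY, ?_⟩
  have hYX := norm_sub_le_of_forall_mem_graphSubmodule (by positivity) hRQ
    fun u hu => norm_snd_sub_apply_fst_le_of_mem_range hR hQX (hRY ▸ hu)
  linarith

end NearbyIdempotent

end Graph

section GraphProjection

variable {𝕜 H0 H1 : Type*} [RCLike 𝕜]
  [NormedAddCommGroup H0] [InnerProductSpace 𝕜 H0] [CompleteSpace H0]
  [NormedAddCommGroup H1] [InnerProductSpace 𝕜 H1] [CompleteSpace H1]
  {P Q : WithLp 2 (H0 × H1) →L[𝕜] WithLp 2 (H0 × H1)} {X Y : H0 →L[𝕜] H1}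

theorem IsStarProjection.norm_sub_apply_le_of_mem_graphSubmodule (hQ : IsStarProjection Q)
    (hQX : LinearMap.range Q.toLinearMap = graphSubmodule X) {w : WithLp 2 (H0 × H1)}
    (hw : w ∈ graphSubmodule Y) : ‖w - Q w‖ ≤ ‖Y - X‖ * ‖w‖ := by
  have hQw : Q (graphEmbedding X w.fst) = graphEmbedding X w.fst :=
    (LinearMap.IsIdempotentElem.mem_range_iff hQ.isIdempotentElem.toLinearMap).1
      (hQX ▸ graphEmbedding_mem X w.fst)
  exact (hQ.norm_sub_apply_le hQw w).trans (norm_sub_graphEmbedding_fst_le hw)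

theorem IsStarProjection.norm_sub_le_of_range_eq_graphSubmodule (hP : IsStarProjection P)
    (hQ : IsStarProjection Q) (hPY : LinearMap.range P.toLinearMap = graphSubmodule Y)
    (hQX : LinearMap.range Q.toLinearMap = graphSubmodule X) : ‖P - Q‖ ≤ 2 * ‖Y - X‖ :=
  hP.norm_sub_le_two_mul hQ (norm_nonneg _)
    (fun _ hw => hQ.norm_sub_apply_le_of_mem_graphSubmodule hQX (hPY ▸ hw))
    (fun _ hw => norm_sub_rev Y X ▸ hP.norm_sub_apply_le_of_mem_graphSubmodule hPY (hQX ▸ hw))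

end GraphProjection

theorem isolated_projection_iff_isolated_solution_general
    {H0 H1 : Type*}
    [NormedAddCommGroup H0] [InnerProductSpace ℂ H0] [CompleteSpace H0]
    [NormedAddCommGroup H1] [InnerProductSpace ℂ H1] [CompleteSpace H1]
    (A0 : H0 →L[ℂ] H0) (A1 : H1 →L[ℂ] H1) (V : H1 →L[ℂ] H0)
    (B : WithLp 2 (H0 × H1) →L[ℂ] WithLp 2 (H0 × H1))
    (hB : ∀ u : WithLp 2 (H0 × H1),
      WithLp.equiv 2 (H0 × H1) (B u) =
        (A0 (WithLp.equiv 2 (H0 × H1) u).1 + V (WithLp.equiv 2 (H0 × H1) u).2,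
         ContinuousLinearMap.adjoint V (WithLp.equiv 2 (H0 × H1) u).1
           + A1 (WithLp.equiv 2 (H0 × H1) u).2))
    (X : H0 →L[ℂ] H1)
    (Q : WithLp 2 (H0 × H1) →L[ℂ] WithLp 2 (H0 × H1))
    (hQ : IsIdempotentElem Q) (hQsa : IsSelfAdjoint Q)
    (hQran : LinearMap.range Q.toLinearMap =
      (LinearMap.graph X.toLinearMap).map (WithLp.linearEquiv 2 ℂ (H0 × H1)).symm.toLinearMap) :
    -- `Q` is isolated among the orthogonal projections onto closed `B`-invariant subspaces
    (∃ ε > (0 : ℝ), ∀ R : WithLp 2 (H0 × H1) →L[ℂ] WithLp 2 (H0 × H1),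
        IsIdempotentElem R → IsSelfAdjoint R →
        (∀ u ∈ LinearMap.range R.toLinearMap, B u ∈ LinearMap.range R.toLinearMap) →
        ‖R - Q‖ < ε → R = Q) ↔
    -- `X` is isolated among the bounded solutions of the Riccati equation
    (∃ ε > (0 : ℝ), ∀ Y : H0 →L[ℂ] H1,
        A1.comp Y - Y.comp A0 - Y.comp (V.comp Y) + ContinuousLinearMap.adjoint V = 0 →
        ‖Y - X‖ < ε → Y = X) := by
  have hinv := riccati_eq_zero_iff_graph_invariant hB
  have hQP : IsStarProjection Q := ⟨hQ, hQsa⟩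
  have hQX : LinearMap.range Q.toLinearMap = graphSubmodule X := hQran
  constructor
  · rintro ⟨ε, hε, hiso⟩
    refine ⟨ε / 2, by positivity, fun Y hY hYX => graphSubmodule_injective ?_⟩
    have hRY := (graphSubmodule Y).range_starProjection
    have hRQ := isStarProjection_starProjection.norm_sub_le_of_range_eq_graphSubmodule hQP hRY hQX
    have hRQ := hiso _ (graphSubmodule Y).isIdempotentElem_starProjection
      (isSelfAdjoint_starProjection _) (by rwa [hRY, ← hinv]) (by linarith)
    rw [← hRY, hRQ, hQX]
  · rintro ⟨ε, hε, hiso⟩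
    refine ⟨min (1 / (2 * (1 + ‖X‖))) (ε / (2 * (1 + ‖X‖) ^ 2)), by positivity,
      fun R hR hRsa hRB hRQ => ?_⟩
    rw [lt_min_iff, lt_div_iff₀ (by positivity), lt_div_iff₀ (by positivity)] at hRQ
    obtain ⟨Y, hRY, hYX⟩ := exists_range_eq_graphSubmodule hR hQ hQX (by linarith)
    have hYX : Y = X := hiso Y ((hinv Y).2 (hRY ▸ hRB)) (by linarith)
    exact (IsStarProjection.ext_iff ⟨hR, hRsa⟩ hQP).2 (by rw [hRY, hYX, hQX])

/-- Let `X : H₀ → H₁` be a bounded solution of the Riccati equation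
`A₁ X - X A₀ - X V X + V* = 0` and `Q` the orthogonal projection onto the graph `G(H₀, X)`.
Then `Q` is an isolated point (in the operator norm topology) of the set of all orthogonal
projections onto closed `B`-invariant subspaces of `H = H₀ ⊕ H₁` iff `X` is an isolated point
(in the operator norm topology) of the set of all bounded solutions of the Riccati equation. -/
theorem isolated_projection_iff_isolated_solution
    {H0 H1 : Type*}
    [NormedAddCommGroup H0] [InnerProductSpace ℂ H0] [CompleteSpace H0]
    [TopologicalSpace.SeparableSpace H0]
    [NormedAddCommGroup H1] [InnerProductSpace ℂ H1] [CompleteSpace H1]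
    [TopologicalSpace.SeparableSpace H1]
    (A0 : H0 →L[ℂ] H0) (A1 : H1 →L[ℂ] H1) (V : H1 →L[ℂ] H0)
    (hA0 : IsSelfAdjoint A0) (hA1 : IsSelfAdjoint A1)
    (B : WithLp 2 (H0 × H1) →L[ℂ] WithLp 2 (H0 × H1))
    (hB : ∀ u : WithLp 2 (H0 × H1),
      WithLp.equiv 2 (H0 × H1) (B u) =
        (A0 (WithLp.equiv 2 (H0 × H1) u).1 + V (WithLp.equiv 2 (H0 × H1) u).2,
         ContinuousLinearMap.adjoint V (WithLp.equiv 2 (H0 × H1) u).1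
           + A1 (WithLp.equiv 2 (H0 × H1) u).2))
    (X : H0 →L[ℂ] H1)
    (hX : A1.comp X - X.comp A0 - X.comp (V.comp X) + ContinuousLinearMap.adjoint V = 0)
    (Q : WithLp 2 (H0 × H1) →L[ℂ] WithLp 2 (H0 × H1))
    (hQ : IsIdempotentElem Q) (hQsa : IsSelfAdjoint Q)
    (hQran : LinearMap.range Q.toLinearMap =
      (LinearMap.graph X.toLinearMap).map (WithLp.linearEquiv 2 ℂ (H0 × H1)).symm.toLinearMap) :
    -- `Q` is isolated among the orthogonal projections onto closed `B`-invariant subspaces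
    (∃ ε > (0 : ℝ), ∀ R : WithLp 2 (H0 × H1) →L[ℂ] WithLp 2 (H0 × H1),
        IsIdempotentElem R → IsSelfAdjoint R →
        (∀ u ∈ LinearMap.range R.toLinearMap, B u ∈ LinearMap.range R.toLinearMap) →
        ‖R - Q‖ < ε → R = Q) ↔
    -- `X` is isolated among the bounded solutions of the Riccati equation
    (∃ ε > (0 : ℝ), ∀ Y : H0 →L[ℂ] H1,
        A1.comp Y - Y.comp A0 - Y.comp (V.comp Y) + ContinuousLinearMap.adjoint V = 0 →
        ‖Y - X‖ < ε → Y = X) :=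
  isolated_projection_iff_isolated_solution_general A0 A1 V B hB X Q hQ hQsa hQran
end

section
/- Let X, Y : H0 -> H1 be bounded operators with ||X|| <= 1 and ||Y|| <= 1 such that the orthogonal projections of H = H0 ⊕ H1 onto the graphs G(H0,X) and G(H0,Y) commute. Set L = Ker(I + Y*X), a closed subspace of H0. Then: (a) L = Ker(I + X*Y); (b) L is contained in Ker(I - X*X) ∩ Ker(I - Y*Y); (c) Yx = -Xx for all x in L and Yx = Xx for all x in the orthogonal complement L^perp of L in H0; (d) L = Ker(X + Y) ∩ (Ker X ∩ Ker Y)^perp; (e) L^perp = Ker(X - Y). -/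
/-!
For a contraction `X` the inequality `‖x‖ ≤ ‖X x‖` forces `X† X x = x`. If `x + Y† X x = 0`,
the chain `‖x‖ = ‖Y† X x‖ ≤ ‖X x‖ ≤ ‖x‖` is one of equalities, so both `X` and `Y†` act
isometrically there, which gives `X† X x = x` and `Y x = -X x` on `L = Ker (I + Y† X)`; from this
`Ker (X - Y) ⊥ L`. Commutation of the graph projections `P_X, P_Y` supplies the complementary
inclusion: for `v = (u, X u)` the vector `P_Y v = (w, X w)` lies in both graphs, so
`w ∈ Ker (X - Y)`, while `v - P_Y v = (u - w, X (u - w)) ⊥ G(H₀, Y)` says exactly `u - w ∈ L`.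
Hence `H₀ = Ker (X - Y) ⊔ L` with orthogonal summands, and everything else is bookkeeping.
-/

open ContinuousLinearMap

theorem WithLp.mem_map_symm_graph_iff {R M N : Type*} [Semiring R] [AddCommGroup M]
    [AddCommGroup N] [Module R M] [Module R N] {p : ENNReal} (f : M →ₗ[R] N)
    (v : WithLp p (M × N)) :
    v ∈ (LinearMap.graph f).map (WithLp.linearEquiv p R (M × N)).symm.toLinearMap ↔
      v.snd = f v.fst := by
  simp [Submodule.mem_map_equiv]

theorem LinearMap.ker_sub_inf_ker_add_le {R M N : Type*} [Ring R] [AddCommGroup M]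
    [AddCommGroup N] [IsAddTorsionFree N] [Module R M] [Module R N] (f g : M →ₗ[R] N) :
    LinearMap.ker (f - g) ⊓ LinearMap.ker (f + g) ≤ LinearMap.ker f ⊓ LinearMap.ker g := by
  intro x ⟨hsub, hadd⟩
  simp only [SetLike.mem_coe, LinearMap.mem_ker, LinearMap.sub_apply, LinearMap.add_apply,
    sub_eq_zero] at hsub hadd
  have h2 : 2 • f x = 0 := by
    rw [two_nsmul]
    nth_rewrite 2 [hsub]
    exact hadd
  have hf : f x = 0 := two_nsmul_eq_zero.1 h2
  exact ⟨hf, by simpa [hf] using hsub.symm⟩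

namespace Submodule

variable {𝕜 E : Type*} [RCLike 𝕜] [NormedAddCommGroup E] [InnerProductSpace 𝕜 E]

theorem orthogonal_eq_of_le_orthogonal_of_sup_eq_top {K L : Submodule 𝕜 E} (hK : K ≤ Lᗮ)
    (hKL : K ⊔ L = ⊤) : Lᗮ = K := by
  refine le_antisymm (fun u hu => ?_) hK
  obtain ⟨k, hk, l, hl, rfl⟩ := mem_sup.1 (hKL ▸ mem_top : u ∈ K ⊔ L)
  have hl' : l ∈ Lᗮ := by simpa using Lᗮ.sub_mem hu (hK hk)
  rw [(mem_bot 𝕜).1 (L.inf_orthogonal_eq_bot.le (mem_inf.2 ⟨hl, hl'⟩)), add_zero]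
  exact hk

end Submodule

theorem ContinuousLinearMap.norm_apply_le_of_norm_le_one {𝕜 E F : Type*}
    [NontriviallyNormedField 𝕜] [SeminormedAddCommGroup E] [SeminormedAddCommGroup F]
    [NormedSpace 𝕜 E] [NormedSpace 𝕜 F] {f : E →L[𝕜] F} (hf : ‖f‖ ≤ 1) (x : E) :
    ‖f x‖ ≤ ‖x‖ :=
  (f.le_of_opNorm_le hf x).trans_eq (one_mul _)

theorem ContinuousLinearMap.apply_mem_range_of_commute {R M : Type*} [Semiring R]
    [TopologicalSpace M] [AddCommMonoid M] [Module R M] {P Q : M →L[R] M}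
    (hP : IsIdempotentElem P) (hPQ : P * Q = Q * P) {v : M}
    (hv : v ∈ LinearMap.range P.toLinearMap) : Q v ∈ LinearMap.range P.toLinearMap := by
  refine ⟨Q v, ?_⟩
  have hPv : P v = v := (LinearMap.IsIdempotentElem.mem_range_iff hP.toLinearMap).1 hv
  change (P * Q) v = Q v
  rw [hPQ]
  exact congrArg Q hPv

namespace ContinuousLinearMap

variable {𝕜 E F : Type*} [RCLike 𝕜]
  [NormedAddCommGroup E] [InnerProductSpace 𝕜 E] [CompleteSpace E]
  [NormedAddCommGroup F] [InnerProductSpace 𝕜 F] [CompleteSpace F]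

theorem sub_apply_mem_orthogonal_range {P : E →L[𝕜] E} (hP : IsIdempotentElem P)
    (hPsa : IsSelfAdjoint P) (v : E) : v - P v ∈ (LinearMap.range P.toLinearMap)ᗮ := by
  rw [(LinearMap.IsIdempotentElem.isSymmetric_iff_orthogonal_range hP.toLinearMap).1
    (isSelfAdjoint_iff_isSymmetric.1 hPsa), LinearMap.mem_ker, coe_coe, map_sub,
    show P (P v) = P v from DFunLike.congr_fun hP v, sub_self]

theorem mem_orthogonal_map_symm_graph_iff (Y : E →L[𝕜] F) (v : WithLp 2 (E × F)) :
    v ∈ ((LinearMap.graph Y.toLinearMap).map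
      (WithLp.linearEquiv 2 𝕜 (E × F)).symm.toLinearMap)ᗮ ↔ v.fst + adjoint Y v.snd = 0 := by
  have hinner : ∀ z : E,
      inner 𝕜 (WithLp.toLp 2 (z, Y z)) v = inner 𝕜 z (v.fst + adjoint Y v.snd) := by
    intro z
    rw [WithLp.prod_inner_apply, inner_add_right, adjoint_inner_right]
    rfl
  constructor
  · intro hv
    refine (inner_self_eq_zero (𝕜 := 𝕜)).1 ?_
    rw [← hinner]
    exact hv _ ((WithLp.mem_map_symm_graph_iff _ _).2 rfl)
  · rintro hv ⟨z, y⟩ hzy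
    obtain rfl : y = Y z := (WithLp.mem_map_symm_graph_iff _ _).1 hzy
    rw [hinner, hv, inner_zero_right]

theorem adjoint_apply_apply_eq_of_norm_le {X : E →L[𝕜] F} (hX : ‖X‖ ≤ 1) {x : E}
    (h : ‖x‖ ≤ ‖X x‖) : adjoint X (X x) = x := by
  -- `‖X† X x - x‖² = ‖X† X x‖² - 2 ‖X x‖² + ‖x‖² ≤ ‖x‖² - 2 ‖x‖² + ‖x‖²`
  have hXx : ‖X x‖ ≤ ‖x‖ := norm_apply_le_of_norm_le_one hX x
  have hXXx : ‖adjoint X (X x)‖ ≤ ‖x‖ :=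
    (norm_apply_le_of_norm_le_one (by rwa [LinearIsometryEquiv.norm_map]) (X x)).trans hXx
  have hre : RCLike.re (inner 𝕜 (adjoint X (X x)) x) = ‖X x‖ ^ 2 := by
    rw [adjoint_inner_left, inner_self_eq_norm_sq]
  have hsq : ‖adjoint X (X x) - x‖ ^ 2 ≤ 0 := by
    rw [@norm_sub_sq 𝕜, hre]
    nlinarith [norm_nonneg (X x), norm_nonneg x, norm_nonneg (adjoint X (X x))]
  rw [← sub_eq_zero, ← norm_eq_zero]
  exact (pow_eq_zero_iff two_ne_zero).1 (hsq.antisymm (sq_nonneg _))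

theorem norm_le_norm_apply_of_add_adjoint_apply_eq_zero {X Y : E →L[𝕜] F} (hY : ‖Y‖ ≤ 1)
    {x : E} (hx : x + adjoint Y (X x) = 0) : ‖x‖ ≤ ‖X x‖ := by
  rw [← norm_neg, ← eq_neg_of_add_eq_zero_right hx]
  exact norm_apply_le_of_norm_le_one (by rwa [LinearIsometryEquiv.norm_map]) (X x)

theorem adjoint_apply_apply_eq_of_add_adjoint_apply_eq_zero {X Y : E →L[𝕜] F} (hX : ‖X‖ ≤ 1)
    (hY : ‖Y‖ ≤ 1) {x : E} (hx : x + adjoint Y (X x) = 0) : adjoint X (X x) = x :=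
  adjoint_apply_apply_eq_of_norm_le hX (norm_le_norm_apply_of_add_adjoint_apply_eq_zero hY hx)

theorem apply_eq_neg_of_add_adjoint_apply_eq_zero {X Y : E →L[𝕜] F} (hX : ‖X‖ ≤ 1)
    (hY : ‖Y‖ ≤ 1) {x : E} (hx : x + adjoint Y (X x) = 0) : Y x = -X x := by
  have hYX : adjoint Y (X x) = -x := eq_neg_of_add_eq_zero_right hx
  have hXx : ‖X x‖ ≤ ‖adjoint Y (X x)‖ := by
    rw [hYX, norm_neg]
    exact norm_apply_le_of_norm_le_one hX x
  have h := adjoint_apply_apply_eq_of_norm_le (X := adjoint Y)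
    (by rwa [LinearIsometryEquiv.norm_map]) hXx
  rw [adjoint_adjoint, hYX, map_neg] at h
  exact neg_eq_iff_eq_neg.1 h

section Kernel

variable {X Y : E →L[𝕜] F} (hX : ‖X‖ ≤ 1) (hY : ‖Y‖ ≤ 1)
include hX hY

theorem ker_id_add_adjoint_comp_le_ker_id_add_adjoint_comp :
    LinearMap.ker (ContinuousLinearMap.id 𝕜 E + (adjoint Y).comp X).toLinearMap ≤
      LinearMap.ker (ContinuousLinearMap.id 𝕜 E + (adjoint X).comp Y).toLinearMap := by
  intro x (hx : x + adjoint Y (X x) = 0)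
  change x + adjoint X (Y x) = 0
  rw [apply_eq_neg_of_add_adjoint_apply_eq_zero hX hY hx, map_neg,
    adjoint_apply_apply_eq_of_add_adjoint_apply_eq_zero hX hY hx, add_neg_cancel]

theorem ker_id_add_adjoint_comp_le_ker_id_sub_adjoint_comp_self :
    LinearMap.ker (ContinuousLinearMap.id 𝕜 E + (adjoint Y).comp X).toLinearMap ≤
      LinearMap.ker (ContinuousLinearMap.id 𝕜 E - (adjoint X).comp X).toLinearMap := by
  intro x (hx : x + adjoint Y (X x) = 0)
  change x - adjoint X (X x) = 0
  rw [adjoint_apply_apply_eq_of_add_adjoint_apply_eq_zero hX hY hx, sub_self]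

theorem ker_sub_le_orthogonal_ker_id_add_adjoint_comp :
    LinearMap.ker (X - Y).toLinearMap ≤
      (LinearMap.ker (ContinuousLinearMap.id 𝕜 E + (adjoint Y).comp X).toLinearMap)ᗮ := by
  intro u hu x (hx : x + adjoint Y (X x) = 0)
  have hXu : X u = Y u := sub_eq_zero.1 hu
  have h : inner 𝕜 x u = -inner 𝕜 x u :=
    calc inner 𝕜 x u = inner 𝕜 (adjoint X (X x)) u := by
          rw [adjoint_apply_apply_eq_of_add_adjoint_apply_eq_zero hX hY hx]
      _ = inner 𝕜 (adjoint Y (X x)) u := by rw [adjoint_inner_left, adjoint_inner_left, hXu]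
      _ = -inner 𝕜 x u := by
          rw [eq_neg_of_add_eq_zero_right hx, inner_neg_left]
  exact CharZero.eq_neg_self_iff.1 h

end Kernel

theorem ker_sub_sup_ker_id_add_adjoint_comp_eq_top (X Y : E →L[𝕜] F)
    {PX PY : WithLp 2 (E × F) →L[𝕜] WithLp 2 (E × F)} (hPX : IsIdempotentElem PX)
    (hPY : IsIdempotentElem PY) (hPYsa : IsSelfAdjoint PY)
    (hPXran : LinearMap.range PX.toLinearMap =
      (LinearMap.graph X.toLinearMap).map (WithLp.linearEquiv 2 𝕜 (E × F)).symm.toLinearMap)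
    (hPYran : LinearMap.range PY.toLinearMap =
      (LinearMap.graph Y.toLinearMap).map (WithLp.linearEquiv 2 𝕜 (E × F)).symm.toLinearMap)
    (hcomm : PX * PY = PY * PX) :
    LinearMap.ker (X - Y).toLinearMap ⊔
      LinearMap.ker (ContinuousLinearMap.id 𝕜 E + (adjoint Y).comp X).toLinearMap = ⊤ := by
  refine eq_top_iff.2 fun u _ => ?_
  set v := WithLp.toLp 2 (u, X u)
  have hv : v ∈ LinearMap.range PX.toLinearMap :=
    hPXran ▸ (WithLp.mem_map_symm_graph_iff _ v).2 rfl
  have hqX := apply_mem_range_of_commute hPX hcomm hv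
  have hqY : PY v ∈ LinearMap.range PY.toLinearMap := ⟨v, rfl⟩
  have hperp := sub_apply_mem_orthogonal_range hPY hPYsa v
  rw [hPXran, WithLp.mem_map_symm_graph_iff] at hqX
  rw [hPYran, WithLp.mem_map_symm_graph_iff] at hqY
  rw [hPYran, mem_orthogonal_map_symm_graph_iff] at hperp
  set w := (PY v).fst
  refine Submodule.mem_sup.2 ⟨w, ?_, u - w, ?_, add_sub_cancel _ _⟩
  · exact sub_eq_zero.2 (hqX.symm.trans hqY)
  · change (u - w) + adjoint Y (X (u - w)) = 0
    rw [map_sub, ← coe_coe X, ← hqX]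
    exact hperp

theorem ker_id_add_adjoint_comp_eq_ker_add_inf_orthogonal {X Y : E →L[𝕜] F} (hX : ‖X‖ ≤ 1)
    (hY : ‖Y‖ ≤ 1) (hsup : LinearMap.ker (X - Y).toLinearMap ⊔
      LinearMap.ker (ContinuousLinearMap.id 𝕜 E + (adjoint Y).comp X).toLinearMap = ⊤) :
    LinearMap.ker (ContinuousLinearMap.id 𝕜 E + (adjoint Y).comp X).toLinearMap =
      LinearMap.ker (X + Y).toLinearMap ⊓
        (LinearMap.ker X.toLinearMap ⊓ LinearMap.ker Y.toLinearMap)ᗮ := by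
  set L := LinearMap.ker (ContinuousLinearMap.id 𝕜 E + (adjoint Y).comp X).toLinearMap
  set K := LinearMap.ker X.toLinearMap ⊓ LinearMap.ker Y.toLinearMap
  have hKsub : K ≤ LinearMap.ker (X - Y).toLinearMap := fun k ⟨hXk, hYk⟩ => by
    change X k - Y k = 0
    rw [show X k = 0 from hXk, show Y k = 0 from hYk, sub_zero]
  have hLK : L ≤ Kᗮ := L.le_orthogonal_orthogonal.trans
    (Submodule.orthogonal_le (hKsub.trans (ker_sub_le_orthogonal_ker_id_add_adjoint_comp hX hY)))
  have hLadd : L ≤ LinearMap.ker (X + Y).toLinearMap := fun x (hx : x + adjoint Y (X x) = 0) => by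
    change X x + Y x = 0
    rw [apply_eq_neg_of_add_adjoint_apply_eq_zero hX hY hx, add_neg_cancel]
  refine le_antisymm (le_inf hLadd hLK) fun x ⟨hxadd, hxK⟩ => ?_
  obtain ⟨k, hk, l, hl, rfl⟩ := Submodule.mem_sup.1 (hsup ▸ Submodule.mem_top : x ∈ _ ⊔ L)
  have hkadd : k ∈ LinearMap.ker (X + Y).toLinearMap := by
    simpa using Submodule.sub_mem _ hxadd (hLadd hl)
  have : IsAddTorsionFree F := .of_isTorsionFree 𝕜 F
  have hkK : k ∈ K := LinearMap.ker_sub_inf_ker_add_le _ _ ⟨hk, hkadd⟩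
  have hkK' : k ∈ Kᗮ := by simpa using Submodule.sub_mem _ hxK (hLK hl)
  rw [(Submodule.mem_bot 𝕜).1 (K.inf_orthogonal_eq_bot.le ⟨hkK, hkK'⟩), zero_add]
  exact hl

end ContinuousLinearMap

theorem commuting_graph_projections_structure_general
    {H0 H1 : Type*}
    [NormedAddCommGroup H0] [InnerProductSpace ℂ H0] [CompleteSpace H0]
    [NormedAddCommGroup H1] [InnerProductSpace ℂ H1] [CompleteSpace H1]
    (X Y : H0 →L[ℂ] H1) (hX : ‖X‖ ≤ 1) (hY : ‖Y‖ ≤ 1)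
    (PX PY : WithLp 2 (H0 × H1) →L[ℂ] WithLp 2 (H0 × H1))
    (hPX : IsIdempotentElem PX)
    (hPY : IsIdempotentElem PY) (hPYsa : IsSelfAdjoint PY)
    (hPXran : LinearMap.range PX.toLinearMap =
      (LinearMap.graph X.toLinearMap).map (WithLp.linearEquiv 2 ℂ (H0 × H1)).symm.toLinearMap)
    (hPYran : LinearMap.range PY.toLinearMap =
      (LinearMap.graph Y.toLinearMap).map (WithLp.linearEquiv 2 ℂ (H0 × H1)).symm.toLinearMap)
    (hcomm : PX * PY = PY * PX) :
    (LinearMap.ker (ContinuousLinearMap.id ℂ H0 + (ContinuousLinearMap.adjoint Y).comp X).toLinearMap =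
      LinearMap.ker (ContinuousLinearMap.id ℂ H0 + (ContinuousLinearMap.adjoint X).comp Y).toLinearMap) ∧
    (LinearMap.ker (ContinuousLinearMap.id ℂ H0 + (ContinuousLinearMap.adjoint Y).comp X).toLinearMap ≤
      LinearMap.ker (ContinuousLinearMap.id ℂ H0 - (ContinuousLinearMap.adjoint X).comp X).toLinearMap ⊓
      LinearMap.ker (ContinuousLinearMap.id ℂ H0 - (ContinuousLinearMap.adjoint Y).comp Y).toLinearMap) ∧
    (∀ x ∈ LinearMap.ker (ContinuousLinearMap.id ℂ H0 + (ContinuousLinearMap.adjoint Y).comp X).toLinearMap,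
      Y x = -(X x)) ∧
    (∀ x ∈ (LinearMap.ker
        (ContinuousLinearMap.id ℂ H0 + (ContinuousLinearMap.adjoint Y).comp X).toLinearMap)ᗮ,
      Y x = X x) ∧
    (LinearMap.ker (ContinuousLinearMap.id ℂ H0 + (ContinuousLinearMap.adjoint Y).comp X).toLinearMap =
      LinearMap.ker (X + Y).toLinearMap ⊓ (LinearMap.ker X.toLinearMap ⊓ LinearMap.ker Y.toLinearMap)ᗮ) ∧
    ((LinearMap.ker (ContinuousLinearMap.id ℂ H0 + (ContinuousLinearMap.adjoint Y).comp X).toLinearMap)ᗮ =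
      LinearMap.ker (X - Y).toLinearMap) := by
  have hsup := ker_sub_sup_ker_id_add_adjoint_comp_eq_top X Y hPX hPY hPYsa hPXran hPYran hcomm
  have hperp := Submodule.orthogonal_eq_of_le_orthogonal_of_sup_eq_top
    (ker_sub_le_orthogonal_ker_id_add_adjoint_comp hX hY) hsup
  have hsymm := le_antisymm (ker_id_add_adjoint_comp_le_ker_id_add_adjoint_comp hX hY)
    (ker_id_add_adjoint_comp_le_ker_id_add_adjoint_comp hY hX)
  refine ⟨hsymm, fun x hx => ⟨?_, ?_⟩, fun x => apply_eq_neg_of_add_adjoint_apply_eq_zero hX hY,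
    fun x hx => (sub_eq_zero.1 (hperp ▸ hx : x ∈ LinearMap.ker (X - Y).toLinearMap)).symm,
    ker_id_add_adjoint_comp_eq_ker_add_inf_orthogonal hX hY hsup, hperp⟩
  · exact ker_id_add_adjoint_comp_le_ker_id_sub_adjoint_comp_self hX hY hx
  · exact ker_id_add_adjoint_comp_le_ker_id_sub_adjoint_comp_self hY hX (hsymm ▸ hx)

/-- Let `X, Y : H₀ → H₁` be contractions such that the orthogonal projections
of `H = H₀ ⊕ H₁` onto their graphs commute, and set `L = Ker (I + Y* X)`.  Then
(a) `L = Ker (I + X* Y)`; (b) `L ⊆ Ker (I - X* X) ⊓ Ker (I - Y* Y)`; (c) `Y = -X` on `L` and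
`Y = X` on `Lᗮ`; (d) `L = Ker (X + Y) ⊓ (Ker X ⊓ Ker Y)ᗮ`; (e) `Lᗮ = Ker (X - Y)`. -/
theorem commuting_graph_projections_structure
    {H0 H1 : Type*}
    [NormedAddCommGroup H0] [InnerProductSpace ℂ H0] [CompleteSpace H0]
    [NormedAddCommGroup H1] [InnerProductSpace ℂ H1] [CompleteSpace H1]
    (X Y : H0 →L[ℂ] H1) (hX : ‖X‖ ≤ 1) (hY : ‖Y‖ ≤ 1)
    (PX PY : WithLp 2 (H0 × H1) →L[ℂ] WithLp 2 (H0 × H1))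
    (hPX : IsIdempotentElem PX) (hPXsa : IsSelfAdjoint PX)
    (hPY : IsIdempotentElem PY) (hPYsa : IsSelfAdjoint PY)
    (hPXran : LinearMap.range PX.toLinearMap =
      (LinearMap.graph X.toLinearMap).map (WithLp.linearEquiv 2 ℂ (H0 × H1)).symm.toLinearMap)
    (hPYran : LinearMap.range PY.toLinearMap =
      (LinearMap.graph Y.toLinearMap).map (WithLp.linearEquiv 2 ℂ (H0 × H1)).symm.toLinearMap)
    (hcomm : PX * PY = PY * PX) :
    (LinearMap.ker (ContinuousLinearMap.id ℂ H0 + (ContinuousLinearMap.adjoint Y).comp X).toLinearMap =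
      LinearMap.ker (ContinuousLinearMap.id ℂ H0 + (ContinuousLinearMap.adjoint X).comp Y).toLinearMap) ∧
    (LinearMap.ker (ContinuousLinearMap.id ℂ H0 + (ContinuousLinearMap.adjoint Y).comp X).toLinearMap ≤
      LinearMap.ker (ContinuousLinearMap.id ℂ H0 - (ContinuousLinearMap.adjoint X).comp X).toLinearMap ⊓
      LinearMap.ker (ContinuousLinearMap.id ℂ H0 - (ContinuousLinearMap.adjoint Y).comp Y).toLinearMap) ∧
    (∀ x ∈ LinearMap.ker (ContinuousLinearMap.id ℂ H0 + (ContinuousLinearMap.adjoint Y).comp X).toLinearMap,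
      Y x = -(X x)) ∧
    (∀ x ∈ (LinearMap.ker
        (ContinuousLinearMap.id ℂ H0 + (ContinuousLinearMap.adjoint Y).comp X).toLinearMap)ᗮ,
      Y x = X x) ∧
    (LinearMap.ker (ContinuousLinearMap.id ℂ H0 + (ContinuousLinearMap.adjoint Y).comp X).toLinearMap =
      LinearMap.ker (X + Y).toLinearMap ⊓ (LinearMap.ker X.toLinearMap ⊓ LinearMap.ker Y.toLinearMap)ᗮ) ∧
    ((LinearMap.ker (ContinuousLinearMap.id ℂ H0 + (ContinuousLinearMap.adjoint Y).comp X).toLinearMap)ᗮ =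
      LinearMap.ker (X - Y).toLinearMap) :=
  commuting_graph_projections_structure_general X Y hX hY PX PY hPX hPY hPYsa hPXran hPYran hcomm
end

section
/- Let X, Y : H0 -> H1 be bounded operators between complex Hilbert spaces with ||X|| <= 1 and ||Y|| <= 1. Then Ker(I + Y*X) = Ker(X + Y) ∩ Ker(I - X*X) ∩ Ker(I - Y*Y); in particular Ker(I + Y*X) = Ker(I + X*Y). -/
/-!
If `x + Y† X x = 0`, then `‖x‖ = ‖Y† (X x)‖ ≤ ‖X x‖ ≤ ‖x‖`, so `X` preserves the norm of `x` and `Y†`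
that of `X x`. For a contraction `A`, a vector with `‖A x‖ = ‖x‖` satisfies `A† A x = x`, because
`‖x - A† A x‖² = ‖x‖² - 2‖A x‖² + ‖A† A x‖² ≤ ‖x‖² - ‖A x‖² = 0`. Applied to `X` and to `Y†` this gives
`X† X x = x` and `Y x = -X x`, hence `Y† Y x = x`. The resulting description of the kernel is symmetric
in `X` and `Y`.
-/

open ContinuousLinearMap

namespace ContinuousLinearMap

variable {𝕜 E F : Type*} [RCLike 𝕜]
  [NormedAddCommGroup E] [InnerProductSpace 𝕜 E] [CompleteSpace E]
  [NormedAddCommGroup F] [InnerProductSpace 𝕜 F] [CompleteSpace F]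

theorem adjoint_apply_apply_eq_self_of_norm_le {A : E →L[𝕜] F} (hA : ‖A‖ ≤ 1) {x : E}
    (hx : ‖x‖ ≤ ‖A x‖) : adjoint A (A x) = x := by
  have hAx : ‖A x‖ ≤ ‖x‖ := by simpa using A.le_of_opNorm_le hA x
  have hAAx : ‖adjoint A (A x)‖ ≤ ‖A x‖ := by
    simpa using (adjoint A).le_of_opNorm_le ((adjoint.norm_map A).trans_le hA) (A x)
  have hre : RCLike.re (inner 𝕜 x (adjoint A (A x))) = ‖A x‖ ^ 2 := by
    rw [adjoint_inner_right, inner_self_eq_norm_sq (𝕜 := 𝕜)]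
  have hsq : ‖x - adjoint A (A x)‖ ^ 2 ≤ 0 := by
    rw [norm_sub_sq (𝕜 := 𝕜), hre]
    nlinarith [norm_nonneg (adjoint A (A x))]
  have hzero : x - adjoint A (A x) = 0 :=
    norm_eq_zero.mp ((pow_eq_zero_iff two_ne_zero).mp (le_antisymm hsq (sq_nonneg _)))
  exact (sub_eq_zero.mp hzero).symm

theorem add_adjoint_apply_eq_zero_iff {X Y : E →L[𝕜] F} (hX : ‖X‖ ≤ 1) (hY : ‖Y‖ ≤ 1) (x : E) :
    x + adjoint Y (X x) = 0 ↔ X x + Y x = 0 ∧ x = adjoint X (X x) ∧ x = adjoint Y (Y x) := by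
  constructor
  · intro hx
    have hYXx : adjoint Y (X x) = -x := eq_neg_of_add_eq_zero_right hx
    have hXx : ‖X x‖ ≤ ‖x‖ := by simpa using X.le_of_opNorm_le hX x
    have hx_le : ‖x‖ ≤ ‖X x‖ := by
      simpa [hYXx] using (adjoint Y).le_of_opNorm_le ((adjoint.norm_map Y).trans_le hY) (X x)
    have hYx : Y x = -X x := by
      have h := adjoint_apply_apply_eq_self_of_norm_le (A := adjoint Y)
        ((adjoint.norm_map Y).trans_le hY) (x := X x) (by rwa [hYXx, norm_neg])
      rw [adjoint_adjoint, hYXx, map_neg] at h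
      exact neg_eq_iff_eq_neg.mp h
    refine ⟨by rw [hYx, add_neg_cancel], (adjoint_apply_apply_eq_self_of_norm_le hX hx_le).symm, ?_⟩
    rw [hYx, map_neg, hYXx, neg_neg]
  · rintro ⟨hsum, -, hYY⟩
    rw [eq_neg_of_add_eq_zero_left hsum, map_neg, ← hYY, add_neg_cancel]

theorem ker_id_add_adjoint_comp {X Y : E →L[𝕜] F} (hX : ‖X‖ ≤ 1) (hY : ‖Y‖ ≤ 1) :
    LinearMap.ker ((ContinuousLinearMap.id 𝕜 E + (adjoint Y).comp X : E →L[𝕜] E) : E →ₗ[𝕜] E) =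
      LinearMap.ker ((X + Y : E →L[𝕜] F) : E →ₗ[𝕜] F) ⊓
      LinearMap.ker ((ContinuousLinearMap.id 𝕜 E - (adjoint X).comp X : E →L[𝕜] E) : E →ₗ[𝕜] E) ⊓
      LinearMap.ker ((ContinuousLinearMap.id 𝕜 E - (adjoint Y).comp Y : E →L[𝕜] E) : E →ₗ[𝕜] E) := by
  ext x
  simp only [LinearMap.mem_ker, Submodule.mem_inf, coe_coe, add_apply, sub_apply, comp_apply,
    id_apply, sub_eq_zero, and_assoc]
  exact add_adjoint_apply_eq_zero_iff hX hY x

end ContinuousLinearMap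

/-- Let `X, Y : H₀ → H₁` be contractions between complex Hilbert spaces.
Then `Ker (I + Y* X) = Ker (X + Y) ⊓ Ker (I - X* X) ⊓ Ker (I - Y* Y)`; in particular
`Ker (I + Y* X) = Ker (I + X* Y)`. -/
theorem ker_one_add_adjoint_comp_eq
    {H0 H1 : Type*}
    [NormedAddCommGroup H0] [InnerProductSpace ℂ H0] [CompleteSpace H0]
    [NormedAddCommGroup H1] [InnerProductSpace ℂ H1] [CompleteSpace H1]
    (X Y : H0 →L[ℂ] H1) (hX : ‖X‖ ≤ 1) (hY : ‖Y‖ ≤ 1) :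
    LinearMap.ker ((ContinuousLinearMap.id ℂ H0 + (ContinuousLinearMap.adjoint Y).comp X : H0 →L[ℂ] H0) : H0 →ₗ[ℂ] H0) =
      LinearMap.ker ((X + Y : H0 →L[ℂ] H1) : H0 →ₗ[ℂ] H1) ⊓
      LinearMap.ker ((ContinuousLinearMap.id ℂ H0 - (ContinuousLinearMap.adjoint X).comp X : H0 →L[ℂ] H0) : H0 →ₗ[ℂ] H0) ⊓
      LinearMap.ker ((ContinuousLinearMap.id ℂ H0 - (ContinuousLinearMap.adjoint Y).comp Y : H0 →L[ℂ] H0) : H0 →ₗ[ℂ] H0) ∧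
    LinearMap.ker ((ContinuousLinearMap.id ℂ H0 + (ContinuousLinearMap.adjoint Y).comp X : H0 →L[ℂ] H0) : H0 →ₗ[ℂ] H0) =
      LinearMap.ker ((ContinuousLinearMap.id ℂ H0 + (ContinuousLinearMap.adjoint X).comp Y : H0 →L[ℂ] H0) : H0 →ₗ[ℂ] H0) := by
  refine ⟨ker_id_add_adjoint_comp hX hY, ?_⟩
  rw [ker_id_add_adjoint_comp hX hY, ker_id_add_adjoint_comp hY hX, add_comm X Y, inf_right_comm]
end

section
/- Let X : H0 -> H1 be a contractive solution of the Riccati equation such that the orthogonal projection Q onto G(H0,X) commutes with the orthogonal projection onto every closed B-invariant subspace of H. If X is strictly contractive, i.e., ||Xx|| < ||x|| for every nonzero x in H0, then X is the unique contractive solution of the Riccati equation. -/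
/-!
Let `R` be the orthogonal projection onto the graph of a contractive solution `Y`. The Riccati
equation makes this graph `B`-invariant, so `R` commutes with `Q`, and two commuting idempotents
coincide as soon as `ran Q ∩ ker R` and `ran R ∩ ker Q` are trivial. A vector `(x, X x)`
orthogonal to the graph of `Y` satisfies `x = -Y† X x`, impossible for `x ≠ 0` because
`‖Y† X x‖ ≤ ‖X x‖ < ‖x‖`. Symmetrically `(y, Y y) ⊥ graph X` gives `y = -X† Y y`, impossible
because `X†` is strictly contractive along with `X`. Hence the graphs, and so `Y` and `X`, agree.
-/

noncomputable section

open ContinuousLinearMap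

namespace Module.End

variable {R M : Type*} [Ring R] [AddCommGroup M] [Module R M] {p q : Module.End R M}

theorem eq_mul_of_range_inf_ker_eq_bot (hpq : Commute p q) (hq : IsIdempotentElem q)
    (h : LinearMap.range p ⊓ LinearMap.ker q = ⊥) : p = p * q := by
  ext v
  have hmem : p (v - q v) ∈ LinearMap.range p ⊓ LinearMap.ker q := by
    refine Submodule.mem_inf.mpr ⟨LinearMap.mem_range_self p _, ?_⟩
    rw [LinearMap.mem_ker, ← mul_apply, ← hpq.eq, mul_apply, map_sub, ← mul_apply q q, hq.eq,
      sub_self, map_zero]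
  rwa [h, Submodule.mem_bot, map_sub, sub_eq_zero] at hmem

theorem eq_of_commute_of_range_inf_ker_eq_bot (hpq : Commute p q) (hp : IsIdempotentElem p)
    (hq : IsIdempotentElem q) (hpq_bot : LinearMap.range p ⊓ LinearMap.ker q = ⊥)
    (hqp_bot : LinearMap.range q ⊓ LinearMap.ker p = ⊥) : p = q :=
  calc p = p * q := eq_mul_of_range_inf_ker_eq_bot hpq hq hpq_bot
    _ = q * p := hpq.eq
    _ = q := (eq_mul_of_range_inf_ker_eq_bot hpq.symm hp hqp_bot).symm

end Module.End

section StrictContraction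

variable {𝕜 E F G : Type*} [NormedAddCommGroup E] [NormedAddCommGroup F] [NormedAddCommGroup G]

def IsStrictContraction (f : E → F) : Prop :=
  ∀ x, x ≠ 0 → ‖f x‖ < ‖x‖

variable [NontriviallyNormedField 𝕜] [NormedSpace 𝕜 E] [NormedSpace 𝕜 F] [NormedSpace 𝕜 G]
  {S : F →L[𝕜] G} {T : E →L[𝕜] F}

theorem IsStrictContraction.norm_le_one_comp (hS : ‖S‖ ≤ 1) (hT : IsStrictContraction T) :
    IsStrictContraction (S ∘L T) := fun x hx =>
  calc ‖S (T x)‖ ≤ ‖T x‖ := by simpa using S.le_of_opNorm_le hS (T x)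
    _ < ‖x‖ := hT x hx

theorem IsStrictContraction.comp_norm_le_one (hS : IsStrictContraction S) (hT : ‖T‖ ≤ 1) :
    IsStrictContraction (S ∘L T) := by
  intro x hx
  by_cases hTx : T x = 0
  · simpa [hTx] using hx
  · calc ‖S (T x)‖ < ‖T x‖ := hS _ hTx
      _ ≤ ‖x‖ := by simpa using T.le_of_opNorm_le hT x

end StrictContraction

section Graph

variable {𝕜 E F : Type*} [RCLike 𝕜] [NormedAddCommGroup E] [InnerProductSpace 𝕜 E]
  [NormedAddCommGroup F] [InnerProductSpace 𝕜 F]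

-- `‖T† y‖² = re ⟪T (T† y), y⟫ ≤ ‖T (T† y)‖ ‖y‖`, and `T` strictly shrinks `T† y ≠ 0`.
theorem IsStrictContraction.adjoint [CompleteSpace E] [CompleteSpace F] {T : E →L[𝕜] F}
    (hT : IsStrictContraction T) : IsStrictContraction (ContinuousLinearMap.adjoint T) := by
  intro y hy
  set z := ContinuousLinearMap.adjoint T y
  rcases eq_or_ne z 0 with hz | hz
  · simpa [hz] using hy
  have hsq : ‖z‖ * ‖z‖ < ‖z‖ * ‖y‖ :=
    calc ‖z‖ * ‖z‖ = RCLike.re (inner 𝕜 (T z) y) := by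
          rw [← adjoint_inner_right, ← sq, ← inner_self_eq_norm_sq (𝕜 := 𝕜)]
      _ ≤ ‖T z‖ * ‖y‖ := re_inner_le_norm _ _
      _ < ‖z‖ * ‖y‖ := mul_lt_mul_of_pos_right (hT z hz) (norm_pos_iff.mpr hy)
  exact lt_of_mul_lt_mul_left hsq (norm_nonneg z)

def graphL2 (T : E →L[𝕜] F) : Submodule 𝕜 (WithLp 2 (E × F)) :=
  (LinearMap.graph T.toLinearMap).map (WithLp.linearEquiv 2 𝕜 (E × F)).symm.toLinearMap

theorem mem_graphL2 {T : E →L[𝕜] F} {u : WithLp 2 (E × F)} :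
    u ∈ graphL2 T ↔ u.snd = T u.fst := by
  simp [graphL2, LinearMap.mem_graph_iff]

theorem graphL2_injective : Function.Injective (graphL2 : (E →L[𝕜] F) → _) := by
  intro S T h
  ext x
  have hx : WithLp.toLp 2 (x, S x) ∈ graphL2 T := h ▸ mem_graphL2.mpr rfl
  exact mem_graphL2.mp hx

theorem isClosed_graphL2 (T : E →L[𝕜] F) : IsClosed (graphL2 T : Set (WithLp 2 (E × F))) := by
  have : (graphL2 T : Set (WithLp 2 (E × F))) = {u | u.snd = T u.fst} :=
    Set.ext fun _ => mem_graphL2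
  rw [this]
  exact isClosed_eq (WithLp.sndL 2 𝕜 E F).continuous
    (T.continuous.comp (WithLp.fstL 2 𝕜 E F).continuous)

variable [CompleteSpace E] [CompleteSpace F]

instance (T : E →L[𝕜] F) : CompleteSpace (graphL2 T) :=
  (isClosed_graphL2 T).completeSpace_coe

theorem mem_graphL2_orthogonal {T : E →L[𝕜] F} {u : WithLp 2 (E × F)} :
    u ∈ (graphL2 T)ᗮ ↔ u.fst + adjoint T u.snd = 0 := by
  have inner_eq : ∀ w ∈ graphL2 T, inner 𝕜 w u = inner 𝕜 w.fst (u.fst + adjoint T u.snd) := by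
    intro w hw
    rw [mem_graphL2] at hw
    simp [hw, inner_add_right, adjoint_inner_right]
  rw [Submodule.mem_orthogonal]
  constructor
  · intro h
    refine ext_inner_left 𝕜 fun x => ?_
    have hx : WithLp.toLp 2 (x, T x) ∈ graphL2 T := mem_graphL2.mpr rfl
    simpa using (inner_eq _ hx).symm.trans (h _ hx)
  · intro h w hw
    rw [inner_eq w hw, h, inner_zero_right]

theorem graphL2_inf_orthogonal_eq_bot {S T : E →L[𝕜] F}
    (h : IsStrictContraction (adjoint S ∘L T)) : graphL2 T ⊓ (graphL2 S)ᗮ = ⊥ := by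
  refine (Submodule.eq_bot_iff _).mpr fun u hu => ?_
  obtain ⟨hT, hS⟩ := Submodule.mem_inf.mp hu
  rw [mem_graphL2] at hT
  rw [mem_graphL2_orthogonal, hT, add_eq_zero_iff_eq_neg'] at hS
  have hfst : u.fst = 0 := by
    by_contra hne
    simpa [hS] using h _ hne
  exact WithLp.ofLp_injective 2 (Prod.ext hfst (by simp [hT, hfst]))

theorem apply_mem_graphL2_of_riccati {A0 : E →L[𝕜] E} {A1 : F →L[𝕜] F} {V : F →L[𝕜] E}
    {B : WithLp 2 (E × F) →L[𝕜] WithLp 2 (E × F)}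
    (hB : ∀ u : WithLp 2 (E × F), WithLp.equiv 2 (E × F) (B u) =
        (A0 (WithLp.equiv 2 (E × F) u).1 + V (WithLp.equiv 2 (E × F) u).2,
         adjoint V (WithLp.equiv 2 (E × F) u).1 + A1 (WithLp.equiv 2 (E × F) u).2))
    {Y : E →L[𝕜] F} (hY : A1.comp Y - Y.comp A0 - Y.comp (V.comp Y) + adjoint V = 0) :
    ∀ u ∈ graphL2 Y, B u ∈ graphL2 Y := by
  intro u hu
  rw [mem_graphL2] at hu ⊢
  have hBu := hB u
  simp only [WithLp.equiv_apply, Prod.ext_iff, WithLp.ofLp_fst, WithLp.ofLp_snd] at hBu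
  have hYu := congrArg (fun Z : E →L[𝕜] F => Z u.fst) hY
  simp only [sub_apply, add_apply, comp_apply, zero_apply] at hYu
  rw [hBu.1, hBu.2, hu, map_add]
  linear_combination (norm := abel) hYu

end Graph

theorem unique_contractive_solution_of_strict_contraction_general
    {H0 H1 : Type*}
    [NormedAddCommGroup H0] [InnerProductSpace ℂ H0] [CompleteSpace H0]
    [NormedAddCommGroup H1] [InnerProductSpace ℂ H1] [CompleteSpace H1]
    (A0 : H0 →L[ℂ] H0) (A1 : H1 →L[ℂ] H1) (V : H1 →L[ℂ] H0)
    (B : WithLp 2 (H0 × H1) →L[ℂ] WithLp 2 (H0 × H1))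
    (hB : ∀ u : WithLp 2 (H0 × H1),
      WithLp.equiv 2 (H0 × H1) (B u) =
        (A0 (WithLp.equiv 2 (H0 × H1) u).1 + V (WithLp.equiv 2 (H0 × H1) u).2,
         ContinuousLinearMap.adjoint V (WithLp.equiv 2 (H0 × H1) u).1
           + A1 (WithLp.equiv 2 (H0 × H1) u).2))
    (X : H0 →L[ℂ] H1)
    (Q : WithLp 2 (H0 × H1) →L[ℂ] WithLp 2 (H0 × H1))
    (hQ : IsIdempotentElem Q) (hQsa : IsSelfAdjoint Q)
    (hQran : LinearMap.range Q.toLinearMap =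
      (LinearMap.graph X.toLinearMap).map (WithLp.linearEquiv 2 ℂ (H0 × H1)).symm.toLinearMap)
    (hQcomm : ∀ R : WithLp 2 (H0 × H1) →L[ℂ] WithLp 2 (H0 × H1),
      IsIdempotentElem R → IsSelfAdjoint R →
      (∀ u ∈ LinearMap.range R.toLinearMap, B u ∈ LinearMap.range R.toLinearMap) → Q * R = R * Q)
    (hstrict : ∀ x : H0, x ≠ 0 → ‖X x‖ < ‖x‖) :
    ∀ Y : H0 →L[ℂ] H1, ‖Y‖ ≤ 1 →
        A1.comp Y - Y.comp A0 - Y.comp (V.comp Y) + ContinuousLinearMap.adjoint V = 0 →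
        Y = X := by
  intro Y hYnorm hY
  have hXstrict : IsStrictContraction X := hstrict
  have hQran : LinearMap.range Q.toLinearMap = graphL2 X := hQran
  set R := (graphL2 Y).starProjection
  have hRran : LinearMap.range R.toLinearMap = graphL2 Y := (graphL2 Y).range_starProjection
  have hRidem : IsIdempotentElem R := (graphL2 Y).isIdempotentElem_starProjection
  have hQR : Q * R = R * Q := hQcomm R hRidem (isSelfAdjoint_starProjection _)
    (hRran ▸ apply_mem_graphL2_of_riccati hB hY)
  have hQker : LinearMap.ker Q.toLinearMap = (graphL2 X)ᗮ := by
    rw [← hQran, orthogonal_range, hQsa.adjoint_eq]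
  have hQ_eq_R : Q = R := by
    refine coe_injective (Module.End.eq_of_commute_of_range_inf_ker_eq_bot
      (by rw [Commute, SemiconjBy, ← toLinearMap_mul, hQR, toLinearMap_mul]) hQ.toLinearMap
      hRidem.toLinearMap ?_ ?_)
    · rw [hQran, (graphL2 Y).ker_starProjection]
      exact graphL2_inf_orthogonal_eq_bot
        (hXstrict.norm_le_one_comp (by rwa [LinearIsometryEquiv.norm_map]))
    · rw [hRran, hQker]
      exact graphL2_inf_orthogonal_eq_bot (hXstrict.adjoint.comp_norm_le_one hYnorm)
  exact graphL2_injective (by rw [← hRran, ← hQ_eq_R, hQran])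

theorem unique_contractive_solution_of_strict_contraction
    {H0 H1 : Type*}
    [NormedAddCommGroup H0] [InnerProductSpace ℂ H0] [CompleteSpace H0]
    [TopologicalSpace.SeparableSpace H0]
    [NormedAddCommGroup H1] [InnerProductSpace ℂ H1] [CompleteSpace H1]
    [TopologicalSpace.SeparableSpace H1]
    (A0 : H0 →L[ℂ] H0) (A1 : H1 →L[ℂ] H1) (V : H1 →L[ℂ] H0)
    (hA0 : IsSelfAdjoint A0) (hA1 : IsSelfAdjoint A1)
    (B : WithLp 2 (H0 × H1) →L[ℂ] WithLp 2 (H0 × H1))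
    (hB : ∀ u : WithLp 2 (H0 × H1),
      WithLp.equiv 2 (H0 × H1) (B u) =
        (A0 (WithLp.equiv 2 (H0 × H1) u).1 + V (WithLp.equiv 2 (H0 × H1) u).2,
         ContinuousLinearMap.adjoint V (WithLp.equiv 2 (H0 × H1) u).1
           + A1 (WithLp.equiv 2 (H0 × H1) u).2))
    (X : H0 →L[ℂ] H1) (hXnorm : ‖X‖ ≤ 1)
    (hX : A1.comp X - X.comp A0 - X.comp (V.comp X) + ContinuousLinearMap.adjoint V = 0)
    (Q : WithLp 2 (H0 × H1) →L[ℂ] WithLp 2 (H0 × H1))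
    (hQ : IsIdempotentElem Q) (hQsa : IsSelfAdjoint Q)
    (hQran : LinearMap.range Q.toLinearMap =
      (LinearMap.graph X.toLinearMap).map (WithLp.linearEquiv 2 ℂ (H0 × H1)).symm.toLinearMap)
    (hQcomm : ∀ R : WithLp 2 (H0 × H1) →L[ℂ] WithLp 2 (H0 × H1),
      IsIdempotentElem R → IsSelfAdjoint R →
      (∀ u ∈ LinearMap.range R.toLinearMap, B u ∈ LinearMap.range R.toLinearMap) → Q * R = R * Q)
    (hstrict : ∀ x : H0, x ≠ 0 → ‖X x‖ < ‖x‖) :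
    ∀ Y : H0 →L[ℂ] H1, ‖Y‖ ≤ 1 →
        A1.comp Y - Y.comp A0 - Y.comp (V.comp Y) + ContinuousLinearMap.adjoint V = 0 →
        Y = X :=
  unique_contractive_solution_of_strict_contraction_general A0 A1 V B hB X Q hQ hQsa hQran hQcomm
    hstrict
end
end
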